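/- arXiv:1108.1751 — 13 statements merged into one kernel-verified Lean document; each statement's English description precedes it below -/
import Mathlib

section
/- Let V be a finite set of vertices with a child relation E (u is a child of w when (u,w) ∈ E) such that the relation 'is a child of' is well-founded (the graph is a DAG). Let a : V → ℝ with a_v ≥ 0 for all v, let t ≥ 0, and suppose xmin : V → ℝ satisfies, for every vertex i, xmin_i = max{0, ∑_{j child of i} xmin_j, a_i − t}. If x' : V → ℝ is feasible (i.e., x'_v ≥ 0 for all v and x'_w ≥ ∑_{u child of w} x'_u for every w) and |x'_i − a_i| ≤ t for all i ∈ V, then x'_i ≥ xmin_i for all i ∈ V. -/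
open Finset
open scoped Classical

/-- For a finite DAG (well-founded child relation `E`, where `E u w`
means `u` is a child of `w`) with non-negative targets `a`, threshold `t ≥ 0`, and
`xmin` satisfying the recurrence `xmin i = max {0, ∑_{j child of i} xmin j, a i − t}`,
any feasible `x'` with `|x' i − a i| ≤ t` for all `i` dominates `xmin` pointwise. -/
theorem stmt_0 {V : Type*} [Fintype V]
    (E : V → V → Prop) (hwf : WellFounded E)
    (a : V → ℝ) (ha : ∀ v, 0 ≤ a v)
    (t : ℝ) (ht : 0 ≤ t)
    (xmin : V → ℝ)
    (hxmin : ∀ i, xmin i =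
      max 0 (max (∑ j ∈ univ.filter (fun j => E j i), xmin j) (a i - t)))
    (x' : V → ℝ)
    (hx'nonneg : ∀ v, 0 ≤ x' v)
    (hx'feas : ∀ w, (∑ u ∈ univ.filter (fun u => E u w), x' u) ≤ x' w)
    (hclose : ∀ i, |x' i - a i| ≤ t) :
    ∀ i, xmin i ≤ x' i := by
  intro i
  induction i using hwf.induction with
  | _ i ih =>
    rw [hxmin i]
    refine max_le (hx'nonneg i) (max_le ?_ ?_)
    · refine le_trans (Finset.sum_le_sum ?_) (hx'feas i)
      intro j hj
      exact ih j (Finset.mem_filter.mp hj).2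
    · have := abs_le.mp (hclose i)
      linarith [this.1]
end

section
/- Let V be a finite set of vertices with a child relation whose 'is a child of' relation is well-founded, let a : V → ℝ with a ≥ 0, let t ≥ 0, and suppose xmin : V → ℝ satisfies xmin_i = max{0, ∑_{j child of i} xmin_j, a_i − t} for every vertex i. Then: (a) xmin is feasible (xmin_v ≥ 0 and xmin_w ≥ ∑_{u child of w} xmin_u for all w); and (b) if there exists a feasible x' with |x'_i − a_i| ≤ t for all i, then |xmin_i − a_i| ≤ t for all i. -/
open Finset
open scoped Classical

/-- For a finite DAG (well-founded child relation `E`) with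
non-negative targets `a`, threshold `t ≥ 0`, and `xmin` satisfying the recurrence
`xmin i = max {0, ∑_{j child of i} xmin j, a i − t}`: (a) `xmin` is feasible, and
(b) if some feasible `x'` satisfies `|x' i − a i| ≤ t` for all `i`, then
`|xmin i − a i| ≤ t` for all `i`. -/
theorem stmt_1 {V : Type*} [Fintype V]
    (E : V → V → Prop) (hwf : WellFounded E)
    (a : V → ℝ) (ha : ∀ v, 0 ≤ a v)
    (t : ℝ) (ht : 0 ≤ t)
    (xmin : V → ℝ)
    (hxmin : ∀ i, xmin i =
      max 0 (max (∑ j ∈ univ.filter (fun j => E j i), xmin j) (a i - t))) :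
    ((∀ v, 0 ≤ xmin v) ∧
      ∀ w, (∑ u ∈ univ.filter (fun u => E u w), xmin u) ≤ xmin w) ∧
    ((∃ x' : V → ℝ, (∀ v, 0 ≤ x' v) ∧
        (∀ w, (∑ u ∈ univ.filter (fun u => E u w), x' u) ≤ x' w) ∧
        (∀ i, |x' i - a i| ≤ t)) →
      ∀ i, |xmin i - a i| ≤ t) := by
  constructor
  · constructor
    · intro v; rw [hxmin v]; exact le_max_left _ _
    · intro w; rw [hxmin w]; exact le_max_of_le_right (le_max_left _ _)
  · rintro ⟨x', hx0, hxf, hxt⟩ i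
    have key : ∀ i, xmin i ≤ x' i := by
      intro i
      induction i using WellFounded.induction hwf with
      | _ i ih =>
        rw [hxmin i]
        refine max_le (hx0 i) (max_le ?_ ?_)
        · calc (∑ j ∈ univ.filter (fun j => E j i), xmin j)
              ≤ ∑ j ∈ univ.filter (fun j => E j i), x' j := by
                refine Finset.sum_le_sum fun j hj => ih j ?_
                simpa using hj
          _ ≤ x' i := hxf i
        · have := abs_le.mp (hxt i)
          linarith [this.1]
    have h1 : a i - t ≤ xmin i := by rw [hxmin i]; exact le_max_of_le_right (le_max_right _ _)
    have h2 : xmin i ≤ a i + t := by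
      have := abs_le.mp (hxt i)
      linarith [key i, this.2]
    rw [abs_le]; constructor <;> linarith
end

section
/- Let U and W be disjoint finite sets, let E ⊆ U × W be a set of edges from U to W (so the DAG is bilayered), and let a : U ∪ W → ℝ with a ≥ 0. Call x : U ∪ W → ℝ feasible if x ≥ 0 and for every w ∈ W, x_w ≥ ∑_{u : (u,w) ∈ E} x_u. Then there exists a feasible x minimizing ∑_{v ∈ U ∪ W} |a_v − x_v| over all feasible assignments which moreover satisfies x_w = a_w for every w ∈ W and x_u ≤ a_u for every u ∈ U. -/
/-!
Any feasible `y` can be pushed into the box `{x | x_W = a_W, 0 ≤ x_U ≤ a_U}` without increasing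
the cost: cap each `y_u` at `a_u`, then multiply it by `∏_{w ∋ u} c_w` with
`c_w = min 1 (a_w / y_w)`. The factor `c_w` makes the children of `w` fit under `a_w`, and by the
Weierstrass product inequality `1 - ∏ c_w ≤ ∑ (1 - c_w)` the total loss on `U` is at most
`∑_w (1 - c_w) y_w = ∑_w (y_w - a_w)⁺`, which `y` already pays on `W`. The feasible points of the
box form a compact set, so the cost attains its minimum there, and that minimum is then global.
-/

open Finset
open scoped Classical

namespace Finset

variable {ι R : Type*} [CommRing R] [PartialOrder R] [IsOrderedRing R] {s : Finset ι} {c : ι → R}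

theorem one_sub_prod_le_sum_one_sub (h0 : ∀ i ∈ s, 0 ≤ c i) (h1 : ∀ i ∈ s, c i ≤ 1) :
    1 - ∏ i ∈ s, c i ≤ ∑ i ∈ s, (1 - c i) := by
  induction s using Finset.induction with
  | empty => simp
  | insert j s hj ih =>
    rw [prod_insert hj, sum_insert hj]
    have hprod : ∏ i ∈ s, c i ≤ 1 :=
      prod_le_one (fun i hi => h0 i (mem_insert_of_mem hi)) fun i hi => h1 i (mem_insert_of_mem hi)
    have ih := ih (fun i hi => h0 i (mem_insert_of_mem hi)) fun i hi => h1 i (mem_insert_of_mem hi)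
    calc 1 - c j * ∏ i ∈ s, c i = (1 - c j) + c j * (1 - ∏ i ∈ s, c i) := by ring
      _ ≤ (1 - c j) + (1 - ∏ i ∈ s, c i) := by
        gcongr
        exact mul_le_of_le_one_left (sub_nonneg.2 hprod) (h1 j (mem_insert_self j s))
      _ ≤ (1 - c j) + ∑ i ∈ s, (1 - c i) := by gcongr

theorem prod_le_of_mem (h0 : ∀ i ∈ s, 0 ≤ c i) (h1 : ∀ i ∈ s, c i ≤ 1) {j : ι} (hj : j ∈ s) :
    ∏ i ∈ s, c i ≤ c j := by
  rw [← mul_prod_erase s c hj]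
  exact mul_le_of_le_one_right (h0 j hj)
    (prod_le_one (fun i hi => h0 i (mem_of_mem_erase hi)) fun i hi => h1 i (mem_of_mem_erase hi))

end Finset

theorem min_one_div_mul_le {t : ℝ} (ht : 0 ≤ t) (s : ℝ) : min 1 (t / s) * s ≤ t := by
  rcases lt_trichotomy s 0 with hs | rfl | hs
  · have : t / s ≤ 1 := (div_nonpos_of_nonneg_of_nonpos ht hs.le).trans zero_le_one
    rw [min_eq_right this, div_mul_cancel₀ t hs.ne]
  · simpa using ht
  · calc min 1 (t / s) * s ≤ t / s * s := by gcongr; exact min_le_right _ _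
      _ = t := div_mul_cancel₀ t hs.ne'

theorem one_sub_min_one_div_mul_le (t s : ℝ) : (1 - min 1 (t / s)) * s ≤ |t - s| := by
  rcases le_or_gt s 0 with hs | hs
  · exact (mul_nonpos_of_nonneg_of_nonpos (sub_nonneg.2 (min_le_left _ _)) hs).trans (abs_nonneg _)
  · rcases le_total (t / s) 1 with h | h
    · rw [min_eq_right h, sub_mul, div_mul_cancel₀ t hs.ne', one_mul, abs_sub_comm]
      exact le_abs_self _
    · rw [min_eq_left h, sub_self, zero_mul]
      exact abs_nonneg _

namespace BilayeredDAG

variable {U W : Type*} {a y : U ⊕ W → ℝ}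

noncomputable def scaleFactor (a y : U ⊕ W → ℝ) (w : W) : ℝ :=
  min 1 (a (Sum.inr w) / y (Sum.inr w))

theorem scaleFactor_nonneg (ha : ∀ v, 0 ≤ a v) (hy : ∀ v, 0 ≤ y v) (w : W) :
    0 ≤ scaleFactor a y w :=
  le_min zero_le_one (div_nonneg (ha _) (hy _))

theorem scaleFactor_le_one (w : W) : scaleFactor a y w ≤ 1 :=
  min_le_left _ _

section

variable [Fintype W]

noncomputable def shrink (E : U → W → Prop) (a y : U ⊕ W → ℝ) : U ⊕ W → ℝ :=
  Sum.elim
    (fun u => min (y (Sum.inl u)) (a (Sum.inl u)) *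
      ∏ w ∈ univ.filter (fun w => E u w), scaleFactor a y w)
    (fun w => a (Sum.inr w))

variable {E : U → W → Prop}

theorem shrink_inl_le (ha : ∀ v, 0 ≤ a v) (hy : ∀ v, 0 ≤ y v) (u : U) :
    shrink E a y (Sum.inl u) ≤ min (y (Sum.inl u)) (a (Sum.inl u)) :=
  mul_le_of_le_one_right (le_min (hy _) (ha _))
    (prod_le_one (fun w _ => scaleFactor_nonneg ha hy w) fun w _ => scaleFactor_le_one w)

theorem shrink_le (ha : ∀ v, 0 ≤ a v) (hy : ∀ v, 0 ≤ y v) : shrink E a y ≤ a := by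
  rintro (u | w)
  · exact (shrink_inl_le ha hy u).trans (min_le_right _ _)
  · exact le_rfl

theorem abs_sub_shrink_inl_le (ha : ∀ v, 0 ≤ a v) (hy : ∀ v, 0 ≤ y v) (u : U) :
    |a (Sum.inl u) - shrink E a y (Sum.inl u)| ≤ |a (Sum.inl u) - y (Sum.inl u)| +
      ∑ w ∈ univ.filter (fun w => E u w),
        min (y (Sum.inl u)) (a (Sum.inl u)) * (1 - scaleFactor a y w) := by
  set b := min (y (Sum.inl u)) (a (Sum.inl u))
  have hb : 0 ≤ b := le_min (hy _) (ha _)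
  have hcap : a (Sum.inl u) - b ≤ |a (Sum.inl u) - y (Sum.inl u)| := by
    rcases le_total (y (Sum.inl u)) (a (Sum.inl u)) with h | h
    · simpa [b, min_eq_left h] using le_abs_self (a (Sum.inl u) - y (Sum.inl u))
    · simp [b, min_eq_right h]
  have hloss : b * (1 - ∏ w ∈ univ.filter (fun w => E u w), scaleFactor a y w) ≤
      ∑ w ∈ univ.filter (fun w => E u w), b * (1 - scaleFactor a y w) := by
    rw [← mul_sum]
    exact mul_le_mul_of_nonneg_left (one_sub_prod_le_sum_one_sub
      (fun w _ => scaleFactor_nonneg ha hy w) fun w _ => scaleFactor_le_one w) hb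
  rw [abs_of_nonneg (sub_nonneg.2 ((shrink_inl_le ha hy u).trans (min_le_right _ _)))]
  calc a (Sum.inl u) - shrink E a y (Sum.inl u)
      = (a (Sum.inl u) - b) +
          b * (1 - ∏ w ∈ univ.filter (fun w => E u w), scaleFactor a y w) := by
        simp only [shrink, Sum.elim_inl, b]
        ring
    _ ≤ _ := add_le_add hcap hloss

end

variable [Fintype U]

def IsFeasible (E : U → W → Prop) (x : U ⊕ W → ℝ) : Prop :=
  (∀ v, 0 ≤ x v) ∧ ∀ w, ∑ u ∈ univ.filter (fun u => E u w), x (Sum.inl u) ≤ x (Sum.inr w)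

theorem isClosed_setOf_isFeasible (E : U → W → Prop) :
    IsClosed {x : U ⊕ W → ℝ | IsFeasible E x} := by
  simp only [IsFeasible, Set.ofPred_and, Set.ofPred_forall]
  exact (isClosed_iInter fun v => isClosed_le continuous_const (continuous_apply v)).inter
    (isClosed_iInter fun w => isClosed_le (continuous_finsetSum _ fun u _ => continuous_apply _)
      (continuous_apply _))

variable {E : U → W → Prop}

theorem sum_mul_one_sub_scaleFactor_le (hy : IsFeasible E y) (w : W) :
    ∑ u ∈ univ.filter (fun u => E u w),
        min (y (Sum.inl u)) (a (Sum.inl u)) * (1 - scaleFactor a y w) ≤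
      |a (Sum.inr w) - y (Sum.inr w)| := by
  rw [← sum_mul, mul_comm]
  calc (1 - scaleFactor a y w) *
        ∑ u ∈ univ.filter (fun u => E u w), min (y (Sum.inl u)) (a (Sum.inl u))
      ≤ (1 - scaleFactor a y w) * y (Sum.inr w) := by
        refine mul_le_mul_of_nonneg_left ?_ (sub_nonneg.2 (scaleFactor_le_one w))
        exact (sum_le_sum fun u _ => min_le_left _ _).trans (hy.2 w)
    _ ≤ |a (Sum.inr w) - y (Sum.inr w)| := one_sub_min_one_div_mul_le _ _

variable [Fintype W]

theorem isFeasible_shrink (ha : ∀ v, 0 ≤ a v) (hy : IsFeasible E y) :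
    IsFeasible E (shrink E a y) := by
  refine ⟨?_, fun w => ?_⟩
  · rintro (u | w)
    · exact mul_nonneg (le_min (hy.1 _) (ha _))
        (prod_nonneg fun w _ => scaleFactor_nonneg ha hy.1 w)
    · exact ha _
  calc ∑ u ∈ univ.filter (fun u => E u w), shrink E a y (Sum.inl u)
      ≤ ∑ u ∈ univ.filter (fun u => E u w), y (Sum.inl u) * scaleFactor a y w := by
        refine sum_le_sum fun u hu => mul_le_mul (min_le_left _ _) ?_
          (prod_nonneg fun w _ => scaleFactor_nonneg ha hy.1 w) (hy.1 _)
        exact prod_le_of_mem (fun w _ => scaleFactor_nonneg ha hy.1 w)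
          (fun w _ => scaleFactor_le_one w) (by simpa using (mem_filter.1 hu).2)
    _ ≤ y (Sum.inr w) * scaleFactor a y w := by
        rw [← sum_mul]
        exact mul_le_mul_of_nonneg_right (hy.2 w) (scaleFactor_nonneg ha hy.1 w)
    _ ≤ a (Sum.inr w) := by
        rw [mul_comm]
        exact min_one_div_mul_le (ha _) _

def l1Cost (a x : U ⊕ W → ℝ) : ℝ :=
  ∑ v, |a v - x v|

theorem continuous_l1Cost (a : U ⊕ W → ℝ) : Continuous (l1Cost a) := by
  unfold l1Cost
  fun_prop

theorem l1Cost_shrink_le (ha : ∀ v, 0 ≤ a v) (hy : IsFeasible E y) :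
    l1Cost a (shrink E a y) ≤ l1Cost a y := by
  simp only [l1Cost, Fintype.sum_sum_type]
  calc ∑ u, |a (Sum.inl u) - shrink E a y (Sum.inl u)| +
        ∑ w, |a (Sum.inr w) - shrink E a y (Sum.inr w)|
      ≤ ∑ u, |a (Sum.inl u) - y (Sum.inl u)| + ∑ u, ∑ w ∈ univ.filter (fun w => E u w),
          min (y (Sum.inl u)) (a (Sum.inl u)) * (1 - scaleFactor a y w) := by
        simp only [shrink, Sum.elim_inr, sub_self, abs_zero, sum_const_zero, add_zero,
          ← sum_add_distrib]
        exact sum_le_sum fun u _ => abs_sub_shrink_inl_le ha hy.1 u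
    _ = ∑ u, |a (Sum.inl u) - y (Sum.inl u)| + ∑ w, ∑ u ∈ univ.filter (fun u => E u w),
          min (y (Sum.inl u)) (a (Sum.inl u)) * (1 - scaleFactor a y w) := by
        rw [sum_comm' (t' := univ) (s' := fun w => univ.filter (fun u => E u w)) (by simp)]
    _ ≤ _ := by
        gcongr with w
        exact sum_mul_one_sub_scaleFactor_le hy w

end BilayeredDAG

open BilayeredDAG in
/-- For a bilayered DAG with edge relation `E ⊆ U × W` and
non-negative targets `a` on `U ⊕ W`, there is a feasible assignment `x` minimizing
the ℓ1 objective `∑ v, |a v − x v|` over all feasible assignments which moreover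
satisfies `x w = a w` for every `w ∈ W` and `x u ≤ a u` for every `u ∈ U`. -/
theorem stmt_2 {U W : Type*} [Fintype U] [Fintype W]
    (E : U → W → Prop)
    (a : U ⊕ W → ℝ) (ha : ∀ v, 0 ≤ a v) :
    ∃ x : U ⊕ W → ℝ,
      ((∀ v, 0 ≤ x v) ∧
        ∀ w, (∑ u ∈ univ.filter (fun u => E u w), x (Sum.inl u)) ≤ x (Sum.inr w)) ∧
      (∀ y : U ⊕ W → ℝ,
        ((∀ v, 0 ≤ y v) ∧
          ∀ w, (∑ u ∈ univ.filter (fun u => E u w), y (Sum.inl u)) ≤ y (Sum.inr w)) →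
        ∑ v, |a v - x v| ≤ ∑ v, |a v - y v|) ∧
      (∀ w, x (Sum.inr w) = a (Sum.inr w)) ∧
      (∀ u, x (Sum.inl u) ≤ a (Sum.inl u)) := by
  set K := Set.Icc 0 a ∩ {x | IsFeasible E x} ∩ {x | ∀ w, x (Sum.inr w) = a (Sum.inr w)}
  have hshrink : ∀ y, IsFeasible E y → shrink E a y ∈ K := fun y hy =>
    ⟨⟨⟨(isFeasible_shrink ha hy).1, shrink_le ha hy.1⟩, isFeasible_shrink ha hy⟩, fun _ => rfl⟩
  have hK : IsCompact K := by
    refine (isCompact_Icc.inter_right (isClosed_setOf_isFeasible E)).inter_right ?_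
    simp only [Set.ofPred_forall]
    exact isClosed_iInter fun w => isClosed_eq (continuous_apply _) continuous_const
  have hzero : IsFeasible E 0 := ⟨fun _ => le_rfl, fun _ => by simp⟩
  obtain ⟨x, ⟨⟨⟨-, hxa⟩, hx⟩, hxW⟩, hmin⟩ :=
    hK.exists_isMinOn ⟨_, hshrink 0 hzero⟩ (continuous_l1Cost a).continuousOn
  refine ⟨x, hx, fun y hy => ?_, hxW, fun u => hxa (Sum.inl u)⟩
  calc l1Cost a x ≤ l1Cost a (shrink E a y) := hmin (hshrink y hy)
    _ ≤ l1Cost a y := l1Cost_shrink_le ha hy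
end

section
/- Let U, W, E ⊆ U × W be a bilayered DAG and a : U ∪ W → ℝ with a ≥ 0. Then the infimum of ∑_{v ∈ U ∪ W} |a_v − x_v| over all feasible assignments x equals the infimum of ∑_{u ∈ U} d_u over all d : U → ℝ satisfying 0 ≤ d_u ≤ a_u for all u ∈ U and, for every w ∈ W, ∑_{u ∈ C(w)} d_u ≥ (∑_{u ∈ C(w)} a_u) − a_w. -/
open Finset
open scoped Classical

private lemma greedy_lemma {U W : Type*} [Fintype U] [Fintype W]
    (E : U → W → Prop) (aw : W → ℝ) (haw : ∀ w, 0 ≤ aw w) :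
    ∀ (S : Finset W) (e : U → ℝ), (∀ u, 0 ≤ e u) →
    ∃ e' : U → ℝ, (∀ u, 0 ≤ e' u) ∧ (∀ u, e' u ≤ e u) ∧
      (∀ w ∈ S, ∑ u ∈ univ.filter (fun u => E u w), e' u ≤ aw w) ∧
      ∑ u, (e u - e' u) ≤
        ∑ w ∈ S, max ((∑ u ∈ univ.filter (fun u => E u w), e u) - aw w) 0 := by
  intro S
  induction S using Finset.induction with
  | empty => exact fun e he => ⟨e, he, fun u => le_rfl, by simp, by simp⟩
  | @insert w S hw ih =>
    intro e he
    set T := ∑ u ∈ univ.filter (fun u => E u w), e u with hT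
    by_cases hcase : T ≤ aw w
    · obtain ⟨e', h0, hle, hS, hsum⟩ := ih e he
      refine ⟨e', h0, hle, ?_, ?_⟩
      · intro w' hw'
        rcases Finset.mem_insert.mp hw' with rfl | hw'
        · exact le_trans (Finset.sum_le_sum fun u _ => hle u) hcase
        · exact hS w' hw'
      · rw [Finset.sum_insert hw]
        have : (0:ℝ) ≤ max (T - aw w) 0 := le_max_right _ _
        linarith
    · push_neg at hcase
      have hT0 : 0 < T := lt_of_le_of_lt (haw w) hcase
      set t := aw w / T with ht
      have ht0 : 0 ≤ t := div_nonneg (haw w) hT0.le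
      have ht1 : t ≤ 1 := (div_le_one hT0).mpr hcase.le
      set e1 : U → ℝ := fun u => if E u w then t * e u else e u with he1
      have he1nn : ∀ u, 0 ≤ e1 u := by
        intro u; simp only [he1]; split
        · exact mul_nonneg ht0 (he u)
        · exact he u
      have he1le : ∀ u, e1 u ≤ e u := by
        intro u; simp only [he1]; split
        · nlinarith [he u]
        · exact le_rfl
      have hsum1 : ∑ u ∈ univ.filter (fun u => E u w), e1 u = aw w := by
        have : ∑ u ∈ univ.filter (fun u => E u w), e1 u
            = ∑ u ∈ univ.filter (fun u => E u w), t * e u := by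
          refine Finset.sum_congr rfl fun u hu => ?_
          simp only [Finset.mem_filter] at hu
          simp [he1, hu.2]
        rw [this, ← Finset.mul_sum, ← hT, ht]
        field_simp
      obtain ⟨e', h0, hle, hS, hsum⟩ := ih e1 he1nn
      refine ⟨e', h0, fun u => (hle u).trans (he1le u), ?_, ?_⟩
      · intro w' hw'
        rcases Finset.mem_insert.mp hw' with rfl | hw'
        · calc ∑ u ∈ univ.filter (fun u => E u w'), e' u
              ≤ ∑ u ∈ univ.filter (fun u => E u w'), e1 u :=
                Finset.sum_le_sum fun u _ => hle u
            _ = aw w' := hsum1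
        · exact hS w' hw'
      · rw [Finset.sum_insert hw]
        have hdiff : ∑ u, (e u - e1 u) = T - aw w := by
          have : ∑ u, (e u - e1 u)
              = ∑ u ∈ univ.filter (fun u => E u w), (e u - e1 u) := by
            rw [← Finset.sum_filter_add_sum_filter_not univ (fun u => E u w)]
            have : ∑ u ∈ univ.filter (fun u => ¬ E u w), (e u - e1 u) = 0 := by
              refine Finset.sum_eq_zero fun u hu => ?_
              simp only [Finset.mem_filter] at hu
              simp [he1, hu.2]
            linarith [this]
          rw [this, Finset.sum_sub_distrib, hsum1, hT]
        have hsplit : ∑ u, (e u - e' u) = ∑ u, (e u - e1 u) + ∑ u, (e1 u - e' u) := by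
          rw [← Finset.sum_add_distrib]
          exact Finset.sum_congr rfl fun u _ => by ring
        have hmono : ∑ w' ∈ S, max ((∑ u ∈ univ.filter (fun u => E u w'), e1 u) - aw w') 0
            ≤ ∑ w' ∈ S, max ((∑ u ∈ univ.filter (fun u => E u w'), e u) - aw w') 0 := by
          refine Finset.sum_le_sum fun w' _ => ?_
          exact max_le_max (by
            have := Finset.sum_le_sum (s := univ.filter (fun u => E u w'))
              (fun u _ => he1le u)
            linarith) le_rfl
        have hmax : max (T - aw w) 0 = T - aw w := max_eq_left (by linarith)
        rw [hsplit, hmax]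
        linarith

/-- For a bilayered DAG with edges `E ⊆ U × W` and non-negative
targets `a`, the infimum of the ℓ1 objective `∑ v, |a v − x v|` over all feasible
assignments `x` equals the infimum of `∑ u, d u` over all `d : U → ℝ` with
`0 ≤ d u ≤ a u` for all `u` and `∑_{u ∈ C(w)} d u ≥ (∑_{u ∈ C(w)} a u) − a w`
for every `w ∈ W`. -/
theorem stmt_3 {U W : Type*} [Fintype U] [Fintype W]
    (E : U → W → Prop)
    (a : U ⊕ W → ℝ) (ha : ∀ v, 0 ≤ a v) :
    sInf {c : ℝ | ∃ x : U ⊕ W → ℝ,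
        ((∀ v, 0 ≤ x v) ∧
          ∀ w, (∑ u ∈ univ.filter (fun u => E u w), x (Sum.inl u)) ≤ x (Sum.inr w)) ∧
        (∑ v, |a v - x v|) = c}
    = sInf {c : ℝ | ∃ d : U → ℝ,
        ((∀ u, 0 ≤ d u ∧ d u ≤ a (Sum.inl u)) ∧
          ∀ w, (∑ u ∈ univ.filter (fun u => E u w), a (Sum.inl u)) - a (Sum.inr w)
            ≤ ∑ u ∈ univ.filter (fun u => E u w), d u) ∧
        (∑ u, d u) = c} := by
  set S1 := {c : ℝ | ∃ x : U ⊕ W → ℝ,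
        ((∀ v, 0 ≤ x v) ∧
          ∀ w, (∑ u ∈ univ.filter (fun u => E u w), x (Sum.inl u)) ≤ x (Sum.inr w)) ∧
        (∑ v, |a v - x v|) = c} with hS1
  set S2 := {c : ℝ | ∃ d : U → ℝ,
        ((∀ u, 0 ≤ d u ∧ d u ≤ a (Sum.inl u)) ∧
          ∀ w, (∑ u ∈ univ.filter (fun u => E u w), a (Sum.inl u)) - a (Sum.inr w)
            ≤ ∑ u ∈ univ.filter (fun u => E u w), d u) ∧
        (∑ u, d u) = c} with hS2
  -- S2 ⊆ S1
  have hsub : S2 ⊆ S1 := by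
    rintro c ⟨d, ⟨hd, hdw⟩, rfl⟩
    refine ⟨Sum.elim (fun u => a (Sum.inl u) - d u)
      (fun w => max (a (Sum.inr w)) (∑ u ∈ univ.filter (fun u => E u w), (a (Sum.inl u) - d u))),
      ⟨?_, ?_⟩, ?_⟩
    · rintro (u | w)
      · simpa using (hd u).2
      · exact le_max_of_le_left (ha _)
    · intro w
      exact le_max_right _ _
    · rw [Fintype.sum_sum_type]
      have h1 : ∀ u : U, |a (Sum.inl u) - (a (Sum.inl u) - d u)| = d u := by
        intro u; rw [sub_sub_cancel, abs_of_nonneg (hd u).1]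
      have h2 : ∀ w : W,
          max (a (Sum.inr w)) (∑ u ∈ univ.filter (fun u => E u w), (a (Sum.inl u) - d u))
          = a (Sum.inr w) := by
        intro w
        refine max_eq_left ?_
        rw [Finset.sum_sub_distrib]
        linarith [hdw w]
      simp only [Sum.elim_inl, Sum.elim_inr, h1, h2, sub_self, abs_zero]
      simp
  -- S2 nonempty
  have hne2 : S2.Nonempty := by
    refine ⟨∑ u, a (Sum.inl u), fun u => a (Sum.inl u), ⟨⟨fun u => ⟨ha _, le_rfl⟩, ?_⟩, rfl⟩⟩
    intro w
    linarith [ha (Sum.inr w)]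
  have hne1 : S1.Nonempty := ⟨_, hsub hne2.choose_spec⟩
  -- lower bounds
  have hbdd1 : BddBelow S1 := by
    refine ⟨0, ?_⟩
    rintro c ⟨x, _, rfl⟩
    exact Finset.sum_nonneg fun v _ => abs_nonneg _
  have hbdd2 : BddBelow S2 := by
    refine ⟨0, ?_⟩
    rintro c ⟨d, ⟨hd, _⟩, rfl⟩
    exact Finset.sum_nonneg fun u _ => (hd u).1
  refine le_antisymm (csInf_le_csInf hbdd1 hne2 hsub) ?_
  refine le_csInf hne1 ?_
  rintro c ⟨x, ⟨hx0, hxw⟩, rfl⟩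
  -- construct d from x
  set e : U → ℝ := fun u => min (x (Sum.inl u)) (a (Sum.inl u)) with he
  have he0 : ∀ u, 0 ≤ e u := fun u => le_min (hx0 _) (ha _)
  obtain ⟨e', h0, hle, hSw, hsum⟩ :=
    greedy_lemma E (fun w => a (Sum.inr w)) (fun w => ha _) Finset.univ e he0
  have hd : ∑ u, (a (Sum.inl u) - e' u) ∈ S2 := by
    refine ⟨fun u => a (Sum.inl u) - e' u, ⟨⟨?_, ?_⟩, rfl⟩⟩
    · intro u
      dsimp only
      constructor
      · have := (hle u).trans (min_le_right (x (Sum.inl u)) (a (Sum.inl u)))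
        linarith
      · linarith [h0 u]
    · intro w
      rw [Finset.sum_sub_distrib]
      have := hSw w (Finset.mem_univ w)
      linarith
  refine le_trans (csInf_le hbdd2 hd) ?_
  -- bound the sum
  have key : ∑ u, (a (Sum.inl u) - e' u)
      = ∑ u, (a (Sum.inl u) - e u) + ∑ u, (e u - e' u) := by
    rw [← Finset.sum_add_distrib]
    exact Finset.sum_congr rfl fun u _ => by ring
  have h1 : ∑ u, (a (Sum.inl u) - e u) ≤ ∑ u, |a (Sum.inl u) - x (Sum.inl u)| := by
    refine Finset.sum_le_sum fun u _ => ?_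
    rcases min_cases (x (Sum.inl u)) (a (Sum.inl u)) with ⟨h, h'⟩ | ⟨h, h'⟩ <;>
      simp only [he, h] <;> [skip; simp] <;> exact (le_abs_self _)
  have h2 : ∑ w ∈ Finset.univ, max ((∑ u ∈ univ.filter (fun u => E u w), e u) - a (Sum.inr w)) 0
      ≤ ∑ w, |a (Sum.inr w) - x (Sum.inr w)| := by
    refine Finset.sum_le_sum fun w _ => ?_
    refine max_le ?_ (abs_nonneg _)
    have hx : ∑ u ∈ univ.filter (fun u => E u w), e u ≤ x (Sum.inr w) :=
      le_trans (Finset.sum_le_sum fun u _ => min_le_left _ _) (hxw w)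
    have : x (Sum.inr w) - a (Sum.inr w) ≤ |a (Sum.inr w) - x (Sum.inr w)| := by
      rw [abs_sub_comm]; exact le_abs_self _
    linarith
  rw [Fintype.sum_sum_type, key]
  linarith
end

section
/- Let T be a finite rooted tree with vertex set V, and let x : V → ℝ be feasible. Let P = (v_0, v_1, …, v_k) be a downward path in T (v_{i+1} is a child of v_i for each i), and let ε > 0 satisfy: ε ≤ x_{v_i} for every 0 ≤ i ≤ k, and x_{v_k} − ∑_{u ∈ C(v_k)} x_u ≥ ε. Then the assignment x' defined by x'_v = x_v − ε for v on P and x'_v = x_v otherwise is feasible. -/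
open Finset
open scoped Classical

/-- A finite rooted tree: a distinguished root and a parent function under which
every vertex eventually reaches the root. -/
structure SBHTree (V : Type*) [Fintype V] [DecidableEq V] where
  root : V
  parent : V → V
  parent_root : parent root = root
  reaches_root : ∀ v : V, ∃ n : ℕ, parent^[n] v = root

/-- The set of children of a vertex `v`. -/
def SBHTree.children {V : Type*} [Fintype V] [DecidableEq V]
    (T : SBHTree V) (v : V) : Finset V :=
  univ.filter (fun u => u ≠ T.root ∧ T.parent u = v)

/-- An assignment is feasible if it is non-negative and the value at each vertex is
at least the sum of the values at its children. -/
def SBHTree.Feasible {V : Type*} [Fintype V] [DecidableEq V]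
    (T : SBHTree V) (x : V → ℝ) : Prop :=
  (∀ v, 0 ≤ x v) ∧ ∀ v, (∑ u ∈ T.children v, x u) ≤ x v

/-
Since `x' ≤ x`, every sum over children can only decrease, so the constraints off the path
still hold. At a path vertex `v_i` with `i < k` the loss of `ε` at `v_i` is
compensated by the same loss at its child `v_{i+1}`, and at `v_k` it is absorbed by the slack
`x_{v_k} - ∑_{u ∈ C(v_k)} x_u ≥ ε`.
-/

theorem Finset.sum_add_le_sum_of_mem {ι M : Type*} [AddCommMonoid M] [PartialOrder M]
    [IsOrderedAddMonoid M] {s : Finset ι} {f g : ι → M} (h : ∀ i ∈ s, f i ≤ g i)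
    {a : ι} (ha : a ∈ s) {δ : M} (hδ : f a + δ ≤ g a) :
    ∑ i ∈ s, f i + δ ≤ ∑ i ∈ s, g i := by
  rw [← add_sum_erase s f ha, ← add_sum_erase s g ha, add_right_comm]
  exact add_le_add hδ (sum_le_sum fun i hi => h i (mem_of_mem_erase hi))

theorem stmt_4_general {V : Type*} [Fintype V] [DecidableEq V] (T : SBHTree V)
    (x : V → ℝ) (hx : T.Feasible x)
    (k : ℕ) (P : Fin (k + 1) → V)
    (hPpath : ∀ i : Fin k, P i.succ ∈ T.children (P i.castSucc))
    (ε : ℝ) (hε : 0 < ε)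
    (hεx : ∀ i, ε ≤ x (P i))
    (hεlast : ε ≤ x (P (Fin.last k)) - ∑ u ∈ T.children (P (Fin.last k)), x u)
    (x' : V → ℝ)
    (hx'on : ∀ i, x' (P i) = x (P i) - ε)
    (hx'off : ∀ v, v ∉ Set.range P → x' v = x v) :
    T.Feasible x' := by
  have hle : ∀ v, x' v ≤ x v := by
    intro v
    by_cases hv : v ∈ Set.range P
    · obtain ⟨i, rfl⟩ := hv
      linarith [hx'on i]
    · exact (hx'off v hv).le
  have hsum_le : ∀ v, ∑ u ∈ T.children v, x' u ≤ ∑ u ∈ T.children v, x u :=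
    fun v => sum_le_sum fun u _ => hle u
  refine ⟨fun v => ?_, fun v => ?_⟩
  · by_cases hv : v ∈ Set.range P
    · obtain ⟨i, rfl⟩ := hv
      linarith [hx'on i, hεx i]
    · rw [hx'off v hv]
      exact hx.1 v
  · by_cases hv : v ∈ Set.range P
    · obtain ⟨i, rfl⟩ := hv
      rw [hx'on]
      obtain ⟨j, rfl⟩ | rfl := Fin.eq_castSucc_or_eq_last i
      · have hchild : ∑ u ∈ T.children (P j.castSucc), x' u + ε
            ≤ ∑ u ∈ T.children (P j.castSucc), x u :=
          sum_add_le_sum_of_mem (fun u _ => hle u) (hPpath j) (by linarith [hx'on j.succ])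
        linarith [hx.2 (P j.castSucc)]
      · linarith [hsum_le (P (Fin.last k))]
    · rw [hx'off v hv]
      exact (hsum_le v).trans (hx.2 v)

/-- Let `x` be feasible on a finite rooted tree, let
`P = (v_0, …, v_k)` be a downward path, and let `ε > 0` satisfy `ε ≤ x (P i)` for
all `i` and `x (P k) − ∑_{u ∈ C(P k)} x u ≥ ε`. Then the assignment obtained from
`x` by subtracting `ε` on the path and leaving all other values unchanged is
feasible. -/
theorem stmt_4 {V : Type*} [Fintype V] [DecidableEq V] (T : SBHTree V)
    (x : V → ℝ) (hx : T.Feasible x)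
    (k : ℕ) (P : Fin (k + 1) → V) (hPinj : Function.Injective P)
    (hPpath : ∀ i : Fin k, P i.succ ∈ T.children (P i.castSucc))
    (ε : ℝ) (hε : 0 < ε)
    (hεx : ∀ i, ε ≤ x (P i))
    (hεlast : ε ≤ x (P (Fin.last k)) - ∑ u ∈ T.children (P (Fin.last k)), x u)
    (x' : V → ℝ)
    (hx'on : ∀ i, x' (P i) = x (P i) - ε)
    (hx'off : ∀ v, v ∉ Set.range P → x' v = x v) :
    T.Feasible x' :=
  stmt_4_general T x hx k P hPpath ε hε hεx hεlast x' hx'on hx'off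
end

section
/- Let T be a finite rooted tree with vertex set V, targets a : V → ℝ with a ≥ 0, and let x : V → ℝ be feasible. Suppose there is a downward path P = (v_0, …, v_k) in T such that x_{v_i} > 0 for every vertex on P, x_{v_k} > ∑_{u ∈ C(v_k)} x_u (in particular this holds when v_k is a leaf with x_{v_k} > 0), and |{ i : x_{v_i} > a_{v_i} }| > |{ i : x_{v_i} ≤ a_{v_i} }|. Then x is not optimal: there exists a feasible x' with ∑_{v ∈ V} |a_v − x'_v| < ∑_{v ∈ V} |a_v − x_v|. -/
open Finset
open scoped Classical

/-- Let `a` be non-negative targets on a finite rooted tree and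
`x` a feasible assignment. If there is a downward path `P = (v_0, …, v_k)` with
`x (P i) > 0` for all `i`, `x (P k) > ∑_{u ∈ C(P k)} x u`, and strictly more
vertices on the path with `x > a` than with `x ≤ a`, then `x` is not optimal:
some feasible `x'` has strictly smaller ℓ1 objective. -/
theorem stmt_6 {V : Type*} [Fintype V] [DecidableEq V] (T : SBHTree V)
    (a : V → ℝ) (ha : ∀ v, 0 ≤ a v)
    (x : V → ℝ) (hx : T.Feasible x)
    (k : ℕ) (P : Fin (k + 1) → V) (hPinj : Function.Injective P)
    (hPpath : ∀ i : Fin k, P i.succ ∈ T.children (P i.castSucc))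
    (hpos : ∀ i, 0 < x (P i))
    (hslack : (∑ u ∈ T.children (P (Fin.last k)), x u) < x (P (Fin.last k)))
    (hmaj : (univ.filter (fun i : Fin (k + 1) => x (P i) ≤ a (P i))).card
      < (univ.filter (fun i : Fin (k + 1) => a (P i) < x (P i))).card) :
    ∃ x' : V → ℝ, T.Feasible x' ∧ (∑ v, |a v - x' v|) < ∑ v, |a v - x v| := by
  classical
  obtain ⟨hx0, hxc⟩ := hx
  -- a positive quantity at each path vertex
  set f : Fin (k+1) → ℝ := fun i =>
    if a (P i) < x (P i) then x (P i) - a (P i) else x (P i) with hf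
  have hfpos : ∀ i, 0 < f i := by
    intro i
    simp only [hf]
    split
    · linarith
    · exact hpos i
  have hfle : ∀ i, f i ≤ x (P i) := by
    intro i
    simp only [hf]
    split
    · linarith [ha (P i)]
    · exact le_rfl
  have hne : (Finset.univ : Finset (Fin (k+1))).Nonempty := univ_nonempty
  set ε : ℝ := min (x (P (Fin.last k)) - ∑ u ∈ T.children (P (Fin.last k)), x u)
      (Finset.univ.inf' hne f) with hεdef
  have hεpos : 0 < ε := by
    apply lt_min
    · linarith
    · rw [Finset.lt_inf'_iff]
      exact fun i _ => hfpos i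
  have hεf : ∀ i, ε ≤ f i := fun i =>
    le_trans (min_le_right _ _) (Finset.inf'_le f (mem_univ i))
  have hεx : ∀ i, ε ≤ x (P i) := fun i => le_trans (hεf i) (hfle i)
  have hεslack : ε ≤ x (P (Fin.last k)) - ∑ u ∈ T.children (P (Fin.last k)), x u :=
    min_le_left _ _
  set S : Finset V := Finset.univ.image P with hS
  set x' : V → ℝ := fun v => if v ∈ S then x v - ε else x v with hx'
  have hx'le : ∀ v, x' v ≤ x v := by
    intro v
    simp only [hx']
    split <;> linarith
  have hx'path : ∀ i, x' (P i) = x (P i) - ε := by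
    intro i
    simp only [hx']
    rw [if_pos (mem_image_of_mem P (mem_univ i))]
  have hsum_le : ∀ v, (∑ u ∈ T.children v, x' u) ≤ ∑ u ∈ T.children v, x u :=
    fun v => Finset.sum_le_sum (fun u _ => hx'le u)
  have hfeas : T.Feasible x' := by
    constructor
    · intro v
      simp only [hx']
      split
      · next hv =>
        obtain ⟨i, _, rfl⟩ := mem_image.mp hv
        linarith [hεx i]
      · exact hx0 v
    · intro v
      by_cases hv : v ∈ S
      · obtain ⟨i, _, rfl⟩ := mem_image.mp hv
        rw [hx'path i]
        by_cases hi : i = Fin.last k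
        · subst hi
          linarith [hsum_le (P (Fin.last k))]
        · obtain ⟨j, rfl⟩ := Fin.exists_castSucc_eq.mpr hi
          have hc := hPpath j
          have h1 : x' (P j.succ) + ∑ u ∈ (T.children (P j.castSucc)).erase (P j.succ), x' u
              = ∑ u ∈ T.children (P j.castSucc), x' u := Finset.add_sum_erase _ _ hc
          have h2 : x (P j.succ) + ∑ u ∈ (T.children (P j.castSucc)).erase (P j.succ), x u
              = ∑ u ∈ T.children (P j.castSucc), x u := Finset.add_sum_erase _ _ hc
          have h3 : (∑ u ∈ (T.children (P j.castSucc)).erase (P j.succ), x' u)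
              ≤ ∑ u ∈ (T.children (P j.castSucc)).erase (P j.succ), x u :=
            Finset.sum_le_sum (fun u _ => hx'le u)
          have h4 := hxc (P j.castSucc)
          have h5 := hx'path j.succ
          linarith
      · have : x' v = x v := by simp only [hx', if_neg hv]
        rw [this]
        exact le_trans (hsum_le v) (hxc v)
  refine ⟨x', hfeas, ?_⟩
  -- the change in objective
  set d : V → ℝ := fun v => |a v - x' v| - |a v - x v| with hd
  have hdsum : (∑ v, d v) = ∑ i : Fin (k+1), d (P i) := by
    have himg : (∑ v ∈ S, d v) = ∑ i : Fin (k+1), d (P i) :=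
      Finset.sum_image (fun i _ j _ h => hPinj h)
    rw [← himg]
    symm
    apply Finset.sum_subset (Finset.subset_univ _)
    intro v _ hv
    have : x' v = x v := by simp only [hx', if_neg hv]
    simp [hd, this]
  have hdle : ∀ i : Fin (k+1), d (P i) ≤ ε := by
    intro i
    have h1 := abs_sub_abs_le_abs_sub (a (P i) - x' (P i)) (a (P i) - x (P i))
    have h2 : a (P i) - x' (P i) - (a (P i) - x (P i)) = ε := by
      rw [hx'path i]; ring
    rw [h2, abs_of_pos hεpos] at h1
    exact h1
  have hdeq : ∀ i : Fin (k+1), a (P i) < x (P i) → d (P i) = -ε := by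
    intro i hi
    have hεi : ε ≤ x (P i) - a (P i) := by
      have := hεf i
      simp only [hf] at this
      rwa [if_pos hi] at this
    simp only [hd, hx'path i]
    rw [abs_of_nonpos (by linarith), abs_of_nonpos (by linarith)]
    ring
  have hsplit := Finset.sum_filter_add_sum_filter_not Finset.univ
    (fun i : Fin (k+1) => x (P i) ≤ a (P i)) (fun i => d (P i))
  have hb1 : (∑ i ∈ Finset.univ.filter (fun i : Fin (k+1) => x (P i) ≤ a (P i)), d (P i))
      ≤ (Finset.univ.filter (fun i : Fin (k+1) => x (P i) ≤ a (P i))).card * ε := by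
    calc (∑ i ∈ Finset.univ.filter (fun i : Fin (k+1) => x (P i) ≤ a (P i)), d (P i))
        ≤ ∑ i ∈ Finset.univ.filter (fun i : Fin (k+1) => x (P i) ≤ a (P i)), ε :=
          Finset.sum_le_sum (fun i _ => hdle i)
      _ = _ := by rw [Finset.sum_const, nsmul_eq_mul]
  have hfilt : Finset.univ.filter (fun i : Fin (k+1) => ¬ x (P i) ≤ a (P i))
      = Finset.univ.filter (fun i : Fin (k+1) => a (P i) < x (P i)) := by
    apply Finset.filter_congr
    intro i _
    simp [not_le]
  have hb2 : (∑ i ∈ Finset.univ.filter (fun i : Fin (k+1) => ¬ x (P i) ≤ a (P i)), d (P i))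
      = -((Finset.univ.filter (fun i : Fin (k+1) => a (P i) < x (P i))).card * ε) := by
    rw [hfilt]
    rw [Finset.sum_congr rfl (fun i hi => hdeq i (by simpa using (mem_filter.mp hi).2))]
    rw [Finset.sum_const, nsmul_eq_mul]
    ring
  have hcard : ((Finset.univ.filter (fun i : Fin (k+1) => x (P i) ≤ a (P i))).card : ℝ)
      < ((Finset.univ.filter (fun i : Fin (k+1) => a (P i) < x (P i))).card : ℝ) := by
    exact_mod_cast hmaj
  have hneg : (∑ i : Fin (k+1), d (P i)) < 0 := by
    rw [← hsplit]
    have := mul_lt_mul_of_pos_right hcard hεpos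
    linarith
  have hfin : (∑ v, d v) < 0 := hdsum ▸ hneg
  have hsub : (∑ v, d v) = (∑ v, |a v - x' v|) - ∑ v, |a v - x v| := by
    simp only [hd, Finset.sum_sub_distrib]
  linarith [hsub ▸ hfin]
end

section
/- Let S_1, …, S_m be subsets of {1, …, n} with S_1 ∪ ⋯ ∪ S_m = {1, …, n}, and consider the associated set-cover SBHSP instance. If I ⊆ {1, …, m} satisfies ⋃_{i ∈ I} S_i = {1, …, n}, then the assignment x given by x(v_i) = 0 for i ∈ I, x(v_i) = 1 for i ∉ I, and x(u_j) = a(u_j) for all j, is feasible, and its weighted ℓ1 cost satisfies ∑_v w(v) |a(v) − x(v)| = |I|. -/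
open Finset
open scoped Classical

/-- Target values of the set-cover SBHSP instance: `a (v_i) = 1` and
`a (u_j) = |{i : j ∈ S i}| − 1`. -/
def scTarget (m n : ℕ) (S : Fin m → Finset (Fin n)) : Fin m ⊕ Fin n → ℝ :=
  Sum.elim (fun _ => 1)
    (fun j => ((univ.filter (fun i : Fin m => j ∈ S i)).card : ℝ) - 1)

/-- Vertex weights of the set-cover SBHSP instance: `w (v_i) = 1`, `w (u_j) = m`. -/
def scWeight (m n : ℕ) : Fin m ⊕ Fin n → ℝ :=
  Sum.elim (fun _ => 1) (fun _ => (m : ℝ))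

/-- Feasibility for the set-cover SBHSP instance: `x ≥ 0` and
`x (u_j) ≥ ∑_{i : j ∈ S i} x (v_i)` for every `j`. -/
def scFeasible (m n : ℕ) (S : Fin m → Finset (Fin n))
    (x : Fin m ⊕ Fin n → ℝ) : Prop :=
  (∀ v, 0 ≤ x v) ∧
    ∀ j : Fin n,
      (∑ i ∈ univ.filter (fun i : Fin m => j ∈ S i), x (Sum.inl i)) ≤ x (Sum.inr j)

/-- The weighted ℓ1 cost of an assignment `x` for the set-cover SBHSP instance. -/
noncomputable def scCost (m n : ℕ) (S : Fin m → Finset (Fin n))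
    (x : Fin m ⊕ Fin n → ℝ) : ℝ :=
  ∑ v, scWeight m n v * |scTarget m n S v - x v|

/-- If `I` indexes a set cover, then the assignment with
`x (v_i) = 0` for `i ∈ I`, `x (v_i) = 1` for `i ∉ I`, and `x (u_j) = a (u_j)` for
all `j` is feasible for the set-cover SBHSP instance, and its weighted ℓ1 cost
equals `|I|`. -/
theorem stmt_7 (m n : ℕ) (S : Fin m → Finset (Fin n))
    (hcover : ∀ j : Fin n, ∃ i, j ∈ S i)
    (I : Finset (Fin m)) (hI : ∀ j : Fin n, ∃ i ∈ I, j ∈ S i)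
    (x : Fin m ⊕ Fin n → ℝ)
    (hx1 : ∀ i, x (Sum.inl i) = if i ∈ I then 0 else 1)
    (hx2 : ∀ j, x (Sum.inr j) = scTarget m n S (Sum.inr j)) :
    scFeasible m n S x ∧ scCost m n S x = I.card := by
  constructor
  · constructor
    · rintro (i | j)
      · rw [hx1]; split <;> norm_num
      · rw [hx2]
        simp only [scTarget, Sum.elim_inr, sub_nonneg]
        obtain ⟨i, hi⟩ := hcover j
        have : 0 < (univ.filter (fun i : Fin m => j ∈ S i)).card :=
          card_pos.2 ⟨i, by simp [hi]⟩
        exact_mod_cast this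
    · intro j
      rw [hx2]
      simp only [scTarget, Sum.elim_inr]
      have hsum : (∑ i ∈ univ.filter (fun i : Fin m => j ∈ S i), x (Sum.inl i))
          = ((univ.filter (fun i : Fin m => j ∈ S i ∧ i ∉ I)).card : ℝ) := by
        have hff : (univ.filter (fun i : Fin m => j ∈ S i ∧ i ∉ I)) =
            (univ.filter (fun i : Fin m => j ∈ S i)).filter (fun i => i ∉ I) := by
          ext k; simp
        calc (∑ i ∈ univ.filter (fun i : Fin m => j ∈ S i), x (Sum.inl i))
            = ∑ i ∈ univ.filter (fun i : Fin m => j ∈ S i),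
                (if i ∉ I then (1:ℝ) else 0) := by
              refine Finset.sum_congr rfl fun i hi => ?_
              rw [hx1]; by_cases h : i ∈ I <;> simp [h]
          _ = ∑ i ∈ (univ.filter (fun i : Fin m => j ∈ S i)).filter (fun i => i ∉ I),
                (1:ℝ) := (Finset.sum_filter _ _).symm
          _ = _ := by rw [hff]; simp
      rw [hsum]
      obtain ⟨i, hiI, hiS⟩ := hI j
      have hsub : (univ.filter (fun i : Fin m => j ∈ S i ∧ i ∉ I)) ⊆
          (univ.filter (fun i : Fin m => j ∈ S i)) \ {i} := by
        intro k hk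
        simp only [mem_filter, mem_sdiff, mem_singleton, mem_univ, true_and] at hk ⊢
        exact ⟨hk.1, fun h => hk.2 (h ▸ hiI)⟩
      have hle := card_le_card hsub
      have hcard : ((univ.filter (fun i : Fin m => j ∈ S i)) \ {i}).card =
          (univ.filter (fun i : Fin m => j ∈ S i)).card - 1 := by
        rw [card_sdiff_of_subset (by simp [hiS])]; simp
      have hpos : 0 < (univ.filter (fun i : Fin m => j ∈ S i)).card :=
        card_pos.2 ⟨i, by simp [hiS]⟩
      rw [hcard] at hle
      have := Nat.cast_le (α := ℝ) |>.2 hle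
      rw [Nat.cast_sub hpos] at this
      simpa using this
  · unfold scCost
    rw [Fintype.sum_sum_type]
    have h2 : (∑ j : Fin n, scWeight m n (Sum.inr j) *
        |scTarget m n S (Sum.inr j) - x (Sum.inr j)|) = 0 := by
      apply Finset.sum_eq_zero
      intro j _
      rw [hx2]; simp
    rw [h2, add_zero]
    have h1 : ∀ i : Fin m, scWeight m n (Sum.inl i) *
        |scTarget m n S (Sum.inl i) - x (Sum.inl i)| = if i ∈ I then 1 else 0 := by
      intro i
      rw [hx1]
      simp only [scWeight, scTarget, Sum.elim_inl, one_mul]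
      split <;> norm_num
    simp_rw [h1]
    rw [Finset.sum_ite_mem, Finset.univ_inter, Finset.sum_const]
    simp
end

section
/- Let S_1, …, S_m be subsets of {1, …, n} with S_1 ∪ ⋯ ∪ S_m = {1, …, n}, and consider the associated set-cover SBHSP instance. If x is a feasible assignment with x(v_i) ∈ {0, 1} for every i and x(u_j) = a(u_j) for every j, then the family { S_i : x(v_i) = 0 } is a set cover, i.e., ⋃_{i : x(v_i) = 0} S_i = {1, …, n}, and the weighted ℓ1 cost of x equals |{ i : x(v_i) = 0 }|. -/
open Finset
open scoped Classical

/-- If `x` is a feasible assignment for the set-cover SBHSP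
instance with `x (v_i) ∈ {0, 1}` for every `i` and `x (u_j) = a (u_j)` for every
`j`, then `{S_i : x (v_i) = 0}` is a set cover, and the weighted ℓ1 cost of `x`
equals `|{i : x (v_i) = 0}|`. -/
theorem stmt_8 (m n : ℕ) (S : Fin m → Finset (Fin n))
    (hcover : ∀ j : Fin n, ∃ i, j ∈ S i)
    (x : Fin m ⊕ Fin n → ℝ)
    (hfeas : scFeasible m n S x)
    (hx01 : ∀ i, x (Sum.inl i) = 0 ∨ x (Sum.inl i) = 1)
    (hxu : ∀ j, x (Sum.inr j) = scTarget m n S (Sum.inr j)) :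
    (∀ j : Fin n, ∃ i, x (Sum.inl i) = 0 ∧ j ∈ S i) ∧
      scCost m n S x = (univ.filter (fun i : Fin m => x (Sum.inl i) = 0)).card := by
  constructor
  · intro j
    by_contra h
    push_neg at h
    have hall : ∀ i ∈ univ.filter (fun i : Fin m => j ∈ S i), x (Sum.inl i) = 1 := by
      intro i hi
      rcases hx01 i with h0 | h1
      · exact absurd (mem_filter.mp hi).2 (h i h0)
      · exact h1
    have hsum : (∑ i ∈ univ.filter (fun i : Fin m => j ∈ S i), x (Sum.inl i))
        = (univ.filter (fun i : Fin m => j ∈ S i)).card := by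
      rw [Finset.sum_congr rfl hall]
      simp
    have hle := hfeas.2 j
    rw [hxu j] at hle
    simp only [scTarget, Sum.elim_inr] at hle
    rw [hsum] at hle
    linarith
  · have hsplit : scCost m n S x =
        (∑ i : Fin m, scWeight m n (Sum.inl i) * |scTarget m n S (Sum.inl i) - x (Sum.inl i)|)
        + ∑ j : Fin n, scWeight m n (Sum.inr j) * |scTarget m n S (Sum.inr j) - x (Sum.inr j)| := by
      simp [scCost, Fintype.sum_sum_type]
    have hzero : ∀ j : Fin n,
        scWeight m n (Sum.inr j) * |scTarget m n S (Sum.inr j) - x (Sum.inr j)| = 0 := by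
      intro j; rw [hxu j]; simp
    rw [hsplit, Finset.sum_congr rfl (fun j _ => hzero j), Finset.sum_const_zero, add_zero]
    have : ∀ i : Fin m,
        scWeight m n (Sum.inl i) * |scTarget m n S (Sum.inl i) - x (Sum.inl i)|
        = if x (Sum.inl i) = 0 then 1 else 0 := by
      intro i
      rcases hx01 i with h0 | h1
      · simp [scWeight, scTarget, h0]
      · simp [scWeight, scTarget, h1]
    rw [Finset.sum_congr rfl (fun i _ => this i)]
    simp
end

section
/- Let T be a finite rooted tree with vertex set V and let a : V → ℕ be integral target values. Then there exists a feasible assignment x : V → ℕ taking non-negative integer values such that ∑_{v ∈ V} |a_v − x_v| ≤ ∑_{v ∈ V} |a_v − y_v| for every feasible real-valued assignment y : V → ℝ; that is, the ℓ1-SBHSP problem on a tree with integral targets admits an integral optimal solution. -/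
open Finset
open scoped Classical

/-!
Lay out the vertices as nested half-open intervals of lengths `y v`, the children of a vertex
packed disjointly inside its interval. For `θ ∈ (0, 1]`, counting the points of `ℤ + θ` in each
interval gives an integral feasible assignment `x^θ` with `|x^θ_v - y_v| < 1` and mean `y_v` over
`θ`. Since `a_v` is an integer, `|a_v - ·|` is affine on the integers within distance `1` of `y_v`,
so the mean objective of `x^θ` equals that of `y`, and some `θ` does at least as well. Objective
values of integral assignments are natural numbers, so a minimiser among the integral feasible
assignments exists, and it beats every real feasible `y`.
-/

open MeasureTheory

theorem Finset.sum_sub_telescope_filter_lt {ι β M : Type*} [LinearOrder ι] [AddCommMonoid β]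
    [AddCommGroup M] (G : β → M) (y : ι → β) (C : Finset ι) :
    ∑ u ∈ C, (G (∑ w ∈ C with u < w, y w) - G (∑ w ∈ C with u < w, y w + y u)) =
      G 0 - G (∑ u ∈ C, y u) := by
  induction C using Finset.induction_on_min with
  | empty => simp
  | insert a s ha ih =>
    have ha' : a ∉ s := fun h => lt_irrefl a (ha a h)
    have hfa : ({w ∈ insert a s | a < w} : Finset ι) = s := by
      rw [filter_insert, if_neg (lt_irrefl a), filter_true_of_mem ha]
    have hfu : ∀ u ∈ s, ({w ∈ insert a s | u < w} : Finset ι) = {w ∈ s | u < w} := by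
      intro u hu
      rw [filter_insert, if_neg (not_lt.2 (ha u hu).le)]
    have hrest : ∑ u ∈ s, (G (∑ w ∈ insert a s with u < w, y w) -
        G (∑ w ∈ insert a s with u < w, y w + y u)) = G 0 - G (∑ u ∈ s, y u) := by
      rw [← ih]
      exact sum_congr rfl fun u hu => by rw [hfu u hu]
    rw [sum_insert ha', sum_insert ha', hfa, hrest, add_comm (y a)]
    abel

instance : IsProbabilityMeasure (volume.restrict (Set.Ioc (0 : ℝ) 1)) :=
  ⟨by simp⟩

theorem integrableOn_floor_sub_Ioc (c : ℝ) :
    IntegrableOn (fun θ : ℝ => ((⌊c - θ⌋ : ℤ) : ℝ)) (Set.Ioc 0 1) := by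
  have hanti : Antitone fun θ : ℝ => ((⌊c - θ⌋ : ℤ) : ℝ) := fun _ _ hst =>
    Int.cast_le.2 (Int.floor_mono (by linarith))
  exact (intervalIntegrable_iff_integrableOn_Ioc_of_le zero_le_one).1 hanti.intervalIntegrable

theorem setIntegral_floor_sub_Ioc (c : ℝ) :
    ∫ θ in Set.Ioc 0 1, ((⌊c - θ⌋ : ℤ) : ℝ) = c - 1 := by
  set f := Int.fract c
  have hf₀ : 0 ≤ f := Int.fract_nonneg c
  have hf₁ : f < 1 := Int.fract_lt_one c
  have hc : c = ⌊c⌋ + f := (Int.floor_add_fract c).symm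
  -- `θ ↦ ⌊c - θ⌋` is left-continuous, so it is constant on each of `Ioc 0 f` and `Ioc f 1`.
  have hlow : ∀ θ ∈ Set.uIoc 0 f, ((⌊c - θ⌋ : ℤ) : ℝ) = ⌊c⌋ := by
    rintro θ hθ
    obtain ⟨hθ₀, hθ₁⟩ := Set.uIoc_of_le hf₀ ▸ hθ
    rw [Int.floor_eq_iff.2 ⟨by linarith, by linarith⟩]
  have hhigh : ∀ θ ∈ Set.uIoc f 1, ((⌊c - θ⌋ : ℤ) : ℝ) = ⌊c⌋ - 1 := by
    rintro θ hθ
    obtain ⟨hθ₀, hθ₁⟩ := Set.uIoc_of_le hf₁.le ▸ hθ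
    rw [show ⌊c - θ⌋ = ⌊c⌋ - 1 from
      Int.floor_eq_iff.2 ⟨by push_cast; linarith, by push_cast; linarith⟩]
    push_cast; ring
  have hii : IntervalIntegrable (fun θ : ℝ => ((⌊c - θ⌋ : ℤ) : ℝ)) volume 0 1 :=
    (intervalIntegrable_iff_integrableOn_Ioc_of_le zero_le_one).2 (integrableOn_floor_sub_Ioc c)
  rw [← intervalIntegral.integral_of_le zero_le_one,
    ← intervalIntegral.integral_add_adjacent_intervals
      (hii.mono_set (Set.uIcc_subset_uIcc_left (Set.mem_uIcc_of_le hf₀ hf₁.le)))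
      (hii.mono_set (Set.uIcc_subset_uIcc_right (Set.mem_uIcc_of_le hf₀ hf₁.le))),
    intervalIntegral.integral_congr_ae (.of_forall hlow),
    intervalIntegral.integral_congr_ae (.of_forall hhigh),
    intervalIntegral.integral_const, intervalIntegral.integral_const]
  simp only [smul_eq_mul]
  linarith

theorem integral_abs_intCast_sub_of_abs_sub_integral_lt_one {α : Type*} [MeasurableSpace α]
    {μ : Measure α} [IsProbabilityMeasure μ] (a : ℤ) {k : α → ℤ}
    (hk : Integrable (fun x => (k x : ℝ)) μ) (hclose : ∀ x, |(k x : ℝ) - ∫ x, (k x : ℝ) ∂μ| < 1) :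
    ∫ x, |(a : ℝ) - k x| ∂μ = |(a : ℝ) - ∫ x, (k x : ℝ) ∂μ| := by
  set r := ∫ x, (k x : ℝ) ∂μ
  -- The integers within distance `1` of `r` all lie on the same side of the integer `a` as `r`,
  -- so `|a - ·|` is affine on the values of `k`.
  rcases le_or_gt (a : ℝ) r with har | hra
  · have hak : ∀ x, |(a : ℝ) - k x| = k x - a := fun x => by
      have : ((a - 1 : ℤ) : ℝ) < k x := by push_cast; linarith [(abs_lt.1 (hclose x)).1]
      have : a ≤ k x := by have := Int.cast_lt.1 this; omega
      rw [abs_sub_comm, abs_of_nonneg (sub_nonneg.2 (Int.cast_le.2 this))]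
    simp_rw [hak]
    rw [integral_sub hk (integrable_const _), integral_const, abs_of_nonpos (by linarith)]
    simp [r]
  · have hak : ∀ x, |(a : ℝ) - k x| = a - k x := fun x => by
      have : (k x : ℝ) < ((a + 1 : ℤ) : ℝ) := by push_cast; linarith [(abs_lt.1 (hclose x)).2]
      have : k x ≤ a := by have := Int.cast_lt.1 this; omega
      rw [abs_of_nonneg (sub_nonneg.2 (Int.cast_le.2 this))]
    simp_rw [hak]
    rw [integral_sub (integrable_const _) hk, integral_const, abs_of_pos (by linarith)]
    simp [r]

theorem sum_abs_natCast_sub_eq_natCast {ι : Type*} (s : Finset ι) (a x : ι → ℕ) :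
    ∑ i ∈ s, |(a i : ℝ) - x i| = ((∑ i ∈ s, ((a i : ℤ) - x i).natAbs : ℕ) : ℝ) := by
  push_cast [Nat.cast_natAbs]
  rfl

namespace SBHTree

variable {V : Type*} [Fintype V] [DecidableEq V] (T : SBHTree V)

noncomputable def depth (v : V) : ℕ := Nat.find (T.reaches_root v)

theorem depth_parent_lt {v : V} (hv : v ≠ T.root) : T.depth (T.parent v) < T.depth v := by
  have hspec : T.parent^[T.depth v] v = T.root := Nat.find_spec (T.reaches_root v)
  have hpos : T.depth v ≠ 0 := fun h => hv (by rwa [h] at hspec)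
  refine lt_of_le_of_lt (Nat.find_le (n := T.depth v - 1) ?_) (by omega)
  rwa [← Function.iterate_succ_apply, Nat.succ_eq_add_one, Nat.sub_add_cancel (by omega)]

/-- Vertex `v` occupies `(intervalTop y v - y v, intervalTop y v]`; the children of `v` fill
consecutive subintervals at the top of it, in the order of `V`. -/
noncomputable def intervalTop [LinearOrder V] (y : V → ℝ) (v : V) : ℝ :=
  if _hv : v = T.root then 0
  else intervalTop y (T.parent v) - ∑ w ∈ T.children (T.parent v) with v < w, y w
termination_by T.depth v
decreasing_by exact T.depth_parent_lt _hv

theorem intervalTop_of_mem_children [LinearOrder V] (y : V → ℝ) {u v : V}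
    (hu : u ∈ T.children v) :
    T.intervalTop y u = T.intervalTop y v - ∑ w ∈ T.children v with u < w, y w := by
  simp only [children, mem_filter, mem_univ, true_and] at hu
  rw [intervalTop, dif_neg hu.1, hu.2]

section Rounding

variable [LinearOrder V] (y : V → ℝ)

/-- The number of points of `ℤ + θ` in the interval of `v`. -/
noncomputable def roundAt (θ : ℝ) (v : V) : ℤ :=
  ⌊T.intervalTop y v - θ⌋ - ⌊T.intervalTop y v - y v - θ⌋

theorem roundAt_nonneg {y : V → ℝ} (hy : ∀ v, 0 ≤ y v) (θ : ℝ) (v : V) :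
    0 ≤ T.roundAt y θ v :=
  sub_nonneg.2 (Int.floor_mono (by linarith [hy v]))

theorem abs_roundAt_sub_lt_one (θ : ℝ) (v : V) : |(T.roundAt y θ v : ℝ) - y v| < 1 := by
  set E := T.intervalTop y v
  have h₁ := Int.floor_le (E - θ)
  have h₂ := Int.lt_floor_add_one (E - θ)
  have h₃ := Int.floor_le (E - y v - θ)
  have h₄ := Int.lt_floor_add_one (E - y v - θ)
  rw [roundAt, Int.cast_sub, abs_lt]
  constructor <;> linarith

theorem integrableOn_roundAt (v : V) :
    IntegrableOn (fun θ => (T.roundAt y θ v : ℝ)) (Set.Ioc 0 1) := by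
  simp only [roundAt, Int.cast_sub]
  exact (integrableOn_floor_sub_Ioc _).sub (integrableOn_floor_sub_Ioc _)

theorem setIntegral_roundAt (v : V) : ∫ θ in Set.Ioc 0 1, (T.roundAt y θ v : ℝ) = y v := by
  simp only [roundAt, Int.cast_sub]
  rw [integral_sub (integrableOn_floor_sub_Ioc _) (integrableOn_floor_sub_Ioc _),
    setIntegral_floor_sub_Ioc, setIntegral_floor_sub_Ioc]
  ring

theorem sum_roundAt_children_le {y : V → ℝ} (hy : T.Feasible y) (θ : ℝ) (v : V) :
    ∑ u ∈ T.children v, T.roundAt y θ u ≤ T.roundAt y θ v := by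
  set E := T.intervalTop y v
  let G : ℝ → ℤ := fun t => ⌊E - t - θ⌋
  calc ∑ u ∈ T.children v, T.roundAt y θ u
      = ∑ u ∈ T.children v, (G (∑ w ∈ T.children v with u < w, y w) -
          G (∑ w ∈ T.children v with u < w, y w + y u)) :=
        sum_congr rfl fun u hu => by
          rw [roundAt, T.intervalTop_of_mem_children y hu]
          simp only [G, E, sub_add_eq_sub_sub]
    _ = G 0 - G (∑ u ∈ T.children v, y u) := Finset.sum_sub_telescope_filter_lt G y _
    _ ≤ T.roundAt y θ v := by
      simp only [G, roundAt, sub_zero]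
      exact sub_le_sub_left (Int.floor_mono (by linarith [hy.2 v])) _

theorem feasible_roundAt {y : V → ℝ} (hy : T.Feasible y) (θ : ℝ) :
    T.Feasible fun v => (T.roundAt y θ v : ℝ) :=
  ⟨fun v => Int.cast_nonneg (T.roundAt_nonneg hy.1 θ v),
    fun v => by simpa only [← Int.cast_sum, Int.cast_le] using T.sum_roundAt_children_le hy θ v⟩

end Rounding

theorem exists_nat_feasible_le (a : V → ℕ) {y : V → ℝ} (hy : T.Feasible y) :
    ∃ x : V → ℕ, T.Feasible (fun v => (x v : ℝ)) ∧
      ∑ v, |(a v : ℝ) - x v| ≤ ∑ v, |(a v : ℝ) - y v| := by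
  let _ : LinearOrder V := LinearOrder.lift' _ (Fintype.equivFin V).injective
  have hint : ∀ v, IntegrableOn (fun θ => |(a v : ℝ) - T.roundAt y θ v|) (Set.Ioc 0 1) :=
    fun v => ((integrable_const _).sub (T.integrableOn_roundAt y v)).abs
  have hmean : ∫ θ in Set.Ioc 0 1, ∑ v, |(a v : ℝ) - T.roundAt y θ v| =
      ∑ v, |(a v : ℝ) - y v| := by
    rw [integral_finsetSum _ fun v _ => hint v]
    refine sum_congr rfl fun v _ => ?_
    have := integral_abs_intCast_sub_of_abs_sub_integral_lt_one (a v)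
      (T.integrableOn_roundAt y v) (by simpa only [T.setIntegral_roundAt] using
        (T.abs_roundAt_sub_lt_one y · v))
    rwa [T.setIntegral_roundAt, Int.cast_natCast] at this
  obtain ⟨θ, hθ⟩ := exists_le_integral (integrable_finsetSum univ fun v _ => hint v)
  have hcast : ∀ v, (((T.roundAt y θ v).toNat : ℕ) : ℝ) = T.roundAt y θ v := fun v => by
    exact_mod_cast Int.toNat_of_nonneg (T.roundAt_nonneg hy.1 θ v)
  refine ⟨fun v => (T.roundAt y θ v).toNat, ?_, ?_⟩ <;> simp only [hcast]
  · exact T.feasible_roundAt hy θ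
  · simpa only [Finset.sum_apply, hmean] using hθ

end SBHTree

/-- On a finite rooted tree with integral targets `a : V → ℕ`,
the ℓ1-SBHSP problem admits an integral optimal solution: there is a feasible
assignment with non-negative integer values whose ℓ1 objective is at most that of
every feasible real-valued assignment. -/
theorem stmt_10 {V : Type*} [Fintype V] [DecidableEq V] (T : SBHTree V)
    (a : V → ℕ) :
    ∃ x : V → ℕ, T.Feasible (fun v => (x v : ℝ)) ∧
      ∀ y : V → ℝ, T.Feasible y →
        (∑ v, |(a v : ℝ) - (x v : ℝ)|) ≤ ∑ v, |(a v : ℝ) - y v| := by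
  obtain ⟨x, hx, hmin⟩ := (measure fun x : V → ℕ => ∑ v, ((a v : ℤ) - x v).natAbs).wf.has_min
    {x | T.Feasible fun v => (x v : ℝ)} ⟨0, fun _ => by simp, fun _ => by simp⟩
  refine ⟨x, hx, fun y hy => ?_⟩
  obtain ⟨z, hz, hzy⟩ := T.exists_nat_feasible_le a hy
  calc ∑ v, |(a v : ℝ) - x v|
      = ((∑ v, ((a v : ℤ) - x v).natAbs : ℕ) : ℝ) := sum_abs_natCast_sub_eq_natCast _ a x
    _ ≤ ((∑ v, ((a v : ℤ) - z v).natAbs : ℕ) : ℝ) := Nat.cast_le.2 (not_lt.1 (hmin z hz))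
    _ = ∑ v, |(a v : ℝ) - z v| := (sum_abs_natCast_sub_eq_natCast _ a z).symm
    _ ≤ ∑ v, |(a v : ℝ) - y v| := hzy
end

section
/- Let T be a finite rooted tree with vertex set V, root r, and parent function p, and let a : V → ℝ with a ≥ 0. Then strong LP duality holds for the ℓ1-SBHSP problem: the infimum of ∑_{v ∈ V} |a_v − x_v| over all feasible assignments x equals the supremum of ∑_{v ∈ V} a_v β_v over all pairs (α, β) with α : V → ℝ, β : V → ℝ satisfying α_v ≥ 0 and −1 ≤ β_v ≤ 1 for all v, β_v + α_v − α_{p(v)} ≤ 0 for every v ≠ r, and β_r + α_r ≤ 0. -/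
open Finset
open scoped Classical

/-- Dual feasibility for the ℓ1-SBHSP LP on a rooted tree: `α ≥ 0`,
`−1 ≤ β ≤ 1`, `β v + α v − α (p v) ≤ 0` for every non-root `v`, and
`β r + α r ≤ 0` at the root `r`. -/
def SBHTree.DualFeasible {V : Type*} [Fintype V] [DecidableEq V]
    (T : SBHTree V) (α β : V → ℝ) : Prop :=
  (∀ v, 0 ≤ α v) ∧ (∀ v, -1 ≤ β v ∧ β v ≤ 1) ∧
    (∀ v, v ≠ T.root → β v + α v - α (T.parent v) ≤ 0) ∧
    β T.root + α T.root ≤ 0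

/-!
The primal value `P` is the `ℓ¹`-distance from `a` to the convex cone `K` of feasible
assignments. Separating `a` from the open convex set `K + {z | ‖z‖₁ < P}` yields a vector `w`
with `x ⬝ᵥ w ≤ 0` on `K` and `a ⬝ᵥ w ≥ P ‖w‖_∞`; rescaled to `‖w‖_∞ ≤ 1` it is a dual
solution of value at least `P`, and weak duality gives the reverse inequality.

For the tree cone, `x ⬝ᵥ β ≤ 0` on `K` is equivalent to `β` having nonpositive sums along all
paths to the root (test against the indicators of such paths, which are feasible), and then
`α v` can be taken to be the largest sum of `β` along a path descending from `v`.
-/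

open Matrix
open scoped Pointwise

section L1Duality

variable {ι : Type*} [Fintype ι]

lemma mul_abs_le_of_forall_abs_lt {P b c : ℝ} (hP : 0 < P) (h : ∀ s, |s| < P → s * b ≤ c) :
    P * |b| ≤ c := by
  refine le_of_forall_lt_imp_le_of_dense fun y hy => ?_
  rcases le_or_gt y 0 with hy0 | hy0
  · exact hy0.trans (by simpa using h 0 (by simpa using hP))
  have hb : 0 < |b| := pos_of_mul_pos_right (hy0.trans hy) hP.le
  have hs : |y / b| < P := by
    rw [abs_div, abs_of_pos hy0, div_lt_iff₀ hb]; linarith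
  simpa [div_mul_cancel₀ y (abs_pos.1 hb)] using h _ hs

lemma exists_eq_dotProduct (f : (ι → ℝ) →ₗ[ℝ] ℝ) : ∃ w : ι → ℝ, ∀ x, f x = x ⬝ᵥ w :=
  ⟨fun i => f (Pi.single i 1), fun x => by
    conv_lhs => rw [pi_eq_sum_univ' x, map_sum]
    simp [dotProduct]⟩

lemma sum_abs_single (i : ι) (s : ℝ) : ∑ j, |(Pi.single i s : ι → ℝ) j| = |s| := by
  simp [Pi.single_apply, apply_ite]

lemma dotProduct_le_sum_abs_sub {a x β : ι → ℝ} (hxβ : x ⬝ᵥ β ≤ 0) (hβ : ∀ i, |β i| ≤ 1) :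
    a ⬝ᵥ β ≤ ∑ i, |a i - x i| := by
  have : (a - x) ⬝ᵥ β ≤ ∑ i, |a i - x i| :=
    Finset.sum_le_sum fun i _ => calc
      (a i - x i) * β i ≤ |a i - x i| * |β i| := abs_mul (a i - x i) (β i) ▸ le_abs_self _
      _ ≤ |a i - x i| := mul_le_of_le_one_right (abs_nonneg _) (hβ i)
  rw [sub_dotProduct] at this
  linarith

lemma convex_setOf_sum_abs_lt (P : ℝ) : Convex ℝ {z : ι → ℝ | ∑ i, |z i| < P} := by
  intro z hz w hw s t hs ht hst
  calc ∑ i, |s * z i + t * w i|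
      ≤ ∑ i, (s * |z i| + t * |w i|) := sum_le_sum fun i _ => by
        simpa [abs_mul, abs_of_nonneg hs, abs_of_nonneg ht] using abs_add_le (s * z i) (t * w i)
    _ = s • ∑ i, |z i| + t • ∑ i, |w i| := by simp only [sum_add_distrib, smul_eq_mul, mul_sum]
    _ < P := convex_Iio P hz hw hs ht hst

lemma isOpen_setOf_sum_abs_lt (P : ℝ) : IsOpen {z : ι → ℝ | ∑ i, |z i| < P} :=
  isOpen_lt (continuous_finsetSum _ fun i _ => (continuous_apply i).abs) continuous_const

lemma notMem_add_setOf_sum_abs_lt_sInf (K : Set (ι → ℝ)) (a : ι → ℝ) :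
    a ∉ K + {z | ∑ i, |z i| < sInf ((fun x : ι → ℝ => ∑ i, |a i - x i|) '' K)} := by
  rintro ⟨x, hx, z, hz, rfl⟩
  have hbdd : BddBelow ((fun y : ι → ℝ => ∑ i, |x i + z i - y i|) '' K) :=
    ⟨0, by rintro _ ⟨y, -, rfl⟩; positivity⟩
  have := csInf_le hbdd ⟨x, hx, rfl⟩
  simp only [add_sub_cancel_left] at this
  exact this.not_gt hz

theorem exists_polar_ge_sInf_sum_abs_sub (K : PointedCone ℝ (ι → ℝ)) (a : ι → ℝ) :
    ∃ β : ι → ℝ, (∀ x ∈ K, x ⬝ᵥ β ≤ 0) ∧ (∀ i, |β i| ≤ 1) ∧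
      sInf ((fun x : ι → ℝ => ∑ i, |a i - x i|) '' K) ≤ a ⬝ᵥ β := by
  set P := sInf ((fun x : ι → ℝ => ∑ i, |a i - x i|) '' K)
  rcases le_or_gt P 0 with hP | hP
  · exact ⟨0, by simp, by simp, by simpa using hP⟩
  set L := {z : ι → ℝ | ∑ i, |z i| < P}
  have h0L : (0 : ι → ℝ) ∈ L := by simpa [L] using hP
  obtain ⟨f, hf⟩ := geometric_hahn_banach_open_point (K.convex.add (convex_setOf_sum_abs_lt P))
    (isOpen_setOf_sum_abs_lt P).add_left (notMem_add_setOf_sum_abs_lt_sInf K a)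
  obtain ⟨w, hw⟩ := exists_eq_dotProduct f.toLinearMap
  replace hw : ∀ x, f x = x ⬝ᵥ w := hw
  replace hf : ∀ x ∈ K, ∀ z ∈ L, (x + z) ⬝ᵥ w < a ⬝ᵥ w := fun x hx z hz => by
    simpa only [hw] using hf _ (Set.add_mem_add hx hz)
  have ha : 0 < a ⬝ᵥ w := by simpa using hf 0 K.zero_mem 0 h0L
  have hK : ∀ x ∈ K, x ⬝ᵥ w ≤ 0 := fun x hx => by
    by_contra! hxw
    have := hf _ (K.smul_mem (div_pos ha hxw).le hx) 0 h0L
    rw [add_zero, smul_dotProduct, smul_eq_mul, div_mul_cancel₀ _ hxw.ne'] at this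
    exact this.false
  -- testing against the points `s • eᵢ` of `L` shows that `a ⬝ᵥ w ≥ P * ‖w‖_∞`
  have hw_le : ∀ i, P * |w i| ≤ a ⬝ᵥ w := fun i =>
    mul_abs_le_of_forall_abs_lt hP fun s hs => by
      simpa using (hf 0 K.zero_mem (Pi.single i s) (by simpa [L, sum_abs_single] using hs)).le
  refine ⟨(P / (a ⬝ᵥ w)) • w, fun x hx => ?_, fun i => ?_, ?_⟩
  · rw [dotProduct_smul, smul_eq_mul]
    exact mul_nonpos_of_nonneg_of_nonpos (div_pos hP ha).le (hK x hx)
  · rw [Pi.smul_apply, smul_eq_mul, abs_mul, abs_of_pos (div_pos hP ha), div_mul_eq_mul_div,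
      div_le_one ha]
    exact hw_le i
  · rw [dotProduct_smul, smul_eq_mul, div_mul_cancel₀ _ ha.ne']

theorem sInf_sum_abs_sub_eq_sSup (K : PointedCone ℝ (ι → ℝ)) (a : ι → ℝ) :
    sInf ((fun x : ι → ℝ => ∑ i, |a i - x i|) '' K)
      = sSup ((a ⬝ᵥ ·) '' {β | (∀ x ∈ K, x ⬝ᵥ β ≤ 0) ∧ ∀ i, |β i| ≤ 1}) := by
  apply le_antisymm
  · obtain ⟨β, hβK, hβ, hle⟩ := exists_polar_ge_sInf_sum_abs_sub K a
    refine hle.trans (le_csSup ⟨∑ i, |a i - 0|, ?_⟩ ⟨β, ⟨hβK, hβ⟩, rfl⟩)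
    rintro _ ⟨γ, ⟨hγK, hγ⟩, rfl⟩
    exact dotProduct_le_sum_abs_sub (hγK 0 K.zero_mem) hγ
  · refine csSup_le ⟨_, 0, by simp, rfl⟩ ?_
    rintro _ ⟨β, ⟨hβK, hβ⟩, rfl⟩
    refine le_csInf ⟨_, 0, K.zero_mem, rfl⟩ ?_
    rintro _ ⟨x, hx, rfl⟩
    exact dotProduct_le_sum_abs_sub (hβK x hx) hβ

end L1Duality

namespace SBHTree

variable {V : Type*} [Fintype V] [DecidableEq V] (T : SBHTree V)

lemma iterate_parent_root (n : ℕ) : T.parent^[n] T.root = T.root :=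
  Function.iterate_fixed T.parent_root n

lemma eq_root_of_isPeriodicPt {v : V} {m : ℕ} (hm : 0 < m)
    (hv : Function.IsPeriodicPt T.parent m v) : v = T.root := by
  obtain ⟨n, hn⟩ := T.reaches_root v
  have h := (hv.mul_const n).eq
  rw [← Nat.sub_add_cancel (Nat.le_mul_of_pos_left n hm), Function.iterate_add_apply, hn,
    iterate_parent_root] at h
  exact h.symm

noncomputable def ancestors (u : V) : Finset V := univ.filter fun v => ∃ n, T.parent^[n] u = v

noncomputable def descendants (v : V) : Finset V := univ.filter fun u => v ∈ T.ancestors u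

@[simp]
lemma mem_ancestors {u v : V} : v ∈ T.ancestors u ↔ ∃ n, T.parent^[n] u = v := by
  simp [ancestors]

@[simp]
lemma mem_descendants {u v : V} : u ∈ T.descendants v ↔ v ∈ T.ancestors u := by
  simp [descendants]

lemma self_mem_ancestors (u : V) : u ∈ T.ancestors u := T.mem_ancestors.2 ⟨0, rfl⟩

lemma parent_mem_ancestors {u v : V} (h : v ∈ T.ancestors u) : T.parent v ∈ T.ancestors u := by
  obtain ⟨n, rfl⟩ := T.mem_ancestors.1 h
  exact T.mem_ancestors.2 ⟨n + 1, Function.iterate_succ_apply' _ _ _⟩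

lemma ancestors_root : T.ancestors T.root = {T.root} := by
  ext v
  simp [iterate_parent_root, eq_comm]

lemma ancestors_eq_insert_parent (v : V) :
    T.ancestors v = insert v (T.ancestors (T.parent v)) := by
  ext w
  simp only [mem_ancestors, mem_insert, ← Function.iterate_succ_apply]
  constructor
  · rintro ⟨_ | n, rfl⟩
    exacts [.inl rfl, .inr ⟨n, rfl⟩]
  · rintro (rfl | ⟨n, rfl⟩)
    exacts [⟨0, rfl⟩, ⟨n + 1, rfl⟩]

lemma notMem_ancestors_parent {v : V} (hv : v ≠ T.root) : v ∉ T.ancestors (T.parent v) := by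
  rintro h
  obtain ⟨n, hn⟩ := T.mem_ancestors.1 h
  exact hv (T.eq_root_of_isPeriodicPt n.succ_pos (by rwa [Function.IsPeriodicPt,
    Function.IsFixedPt, Function.iterate_succ_apply]))

lemma mem_ancestors_total {u c c' : V} (hc : c ∈ T.ancestors u) (hc' : c' ∈ T.ancestors u) :
    c ∈ T.ancestors c' ∨ c' ∈ T.ancestors c := by
  obtain ⟨n, rfl⟩ := T.mem_ancestors.1 hc
  obtain ⟨m, rfl⟩ := T.mem_ancestors.1 hc'
  simp only [mem_ancestors, ← Function.iterate_add_apply]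
  rcases le_total n m with h | h
  · exact .inr ⟨m - n, by rw [Nat.sub_add_cancel h]⟩
  · exact .inl ⟨n - m, by rw [Nat.sub_add_cancel h]⟩

lemma eq_of_mem_ancestors_of_parent_eq {c c' : V} (hc' : c' ≠ T.root)
    (hp : T.parent c = T.parent c') (h : c' ∈ T.ancestors c) : c = c' := by
  obtain ⟨_ | k, hk⟩ := T.mem_ancestors.1 h
  · exact hk
  rw [Function.iterate_succ_apply, hp] at hk
  have hroot : T.parent c' = T.root := T.eq_root_of_isPeriodicPt k.succ_pos <| by
    rw [Function.IsPeriodicPt, Function.IsFixedPt, Function.iterate_succ_apply', hk]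
  rw [hroot, iterate_parent_root] at hk
  exact absurd hk.symm hc'

lemma mem_children {u v : V} : u ∈ T.children v ↔ u ≠ T.root ∧ T.parent u = v := by
  simp [children]

lemma feasible_indicator_ancestors (u : V) :
    T.Feasible fun v => if v ∈ T.ancestors u then 1 else 0 := by
  refine ⟨fun v => by dsimp only; split_ifs <;> norm_num, fun v => ?_⟩
  dsimp only
  by_cases hv : v ∈ T.ancestors u
  · rw [sum_boole, if_pos hv, Nat.cast_le_one, card_le_one]
    simp only [mem_filter, mem_children]
    rintro c ⟨⟨hc0, rfl⟩, hc⟩ c' ⟨⟨hc', hp⟩, hc'u⟩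
    rcases T.mem_ancestors_total hc hc'u with h | h
    · exact (T.eq_of_mem_ancestors_of_parent_eq hc0 hp h).symm
    · exact T.eq_of_mem_ancestors_of_parent_eq hc' hp.symm h
  · rw [if_neg hv, sum_eq_zero fun c hc => if_neg fun h => hv ?_]
    obtain ⟨-, rfl⟩ := T.mem_children.1 hc
    exact T.parent_mem_ancestors h

def feasibleCone : PointedCone ℝ (V → ℝ) where
  carrier := {x | T.Feasible x}
  add_mem' := fun ⟨hx0, hx⟩ ⟨hy0, hy⟩ =>
    ⟨fun v => add_nonneg (hx0 v) (hy0 v),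
      fun v => by simpa only [Pi.add_apply, sum_add_distrib] using add_le_add (hx v) (hy v)⟩
  zero_mem' := ⟨fun _ => le_rfl, fun _ => by simp⟩
  smul_mem' := fun ⟨c, hc⟩ _ ⟨hx0, hx⟩ => by
    simp only [Nonneg.mk_smul]
    exact ⟨fun v => smul_nonneg hc (hx0 v), fun v => by
      simpa only [Pi.smul_apply, smul_eq_mul, ← mul_sum] using mul_le_mul_of_nonneg_left (hx v) hc⟩

noncomputable def pathSum (β : V → ℝ) (u : V) : ℝ := ∑ v ∈ T.ancestors u, β v

lemma pathSum_root (β : V → ℝ) : T.pathSum β T.root = β T.root := by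
  rw [pathSum, ancestors_root, sum_singleton]

lemma pathSum_of_ne_root (β : V → ℝ) {v : V} (hv : v ≠ T.root) :
    T.pathSum β v = β v + T.pathSum β (T.parent v) := by
  rw [pathSum, ancestors_eq_insert_parent, sum_insert (T.notMem_ancestors_parent hv), pathSum]

lemma pathSum_nonpos_of_mem_polar {β : V → ℝ} (hβ : ∀ x ∈ T.feasibleCone, x ⬝ᵥ β ≤ 0)
    (u : V) : T.pathSum β u ≤ 0 := by
  simpa only [dotProduct, ite_mul, one_mul, zero_mul, sum_ite_mem, univ_inter, pathSum] using
    hβ _ (T.feasible_indicator_ancestors u)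

lemma exists_dualFeasible {β : V → ℝ} (hβ : ∀ u, T.pathSum β u ≤ 0) (hβ1 : ∀ v, |β v| ≤ 1) :
    ∃ α, T.DualFeasible α β := by
  -- `α v` is the largest sum of `β` along a path from a descendant of `v` up to, but
  -- excluding, `v`
  let α v := (T.descendants v).sup' ⟨v, by simpa using T.self_mem_ancestors v⟩
    fun u => T.pathSum β u - T.pathSum β v
  have le_α : ∀ {u v}, v ∈ T.ancestors u → T.pathSum β u - T.pathSum β v ≤ α v :=
    fun {_ v} h => le_sup' (fun w => T.pathSum β w - T.pathSum β v) (T.mem_descendants.2 h)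
  refine ⟨α, fun v => ?_, fun v => abs_le.1 (hβ1 v), fun v hv => ?_, ?_⟩
  · simpa using le_α (T.self_mem_ancestors v)
  · have : α v ≤ α (T.parent v) - β v := sup'_le _ _ fun u hu => by
      have := le_α (T.parent_mem_ancestors (T.mem_descendants.1 hu))
      rw [T.pathSum_of_ne_root β hv]
      linarith
    linarith
  · have : α T.root ≤ -β T.root := sup'_le _ _ fun u _ => by
      linarith [hβ u, T.pathSum_root β]
    linarith

lemma sum_sum_children (f : V → V → ℝ) :
    ∑ w, ∑ u ∈ T.children w, f w u = ∑ u ∈ univ.erase T.root, f (T.parent u) u := by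
  rw [sum_comm' (t' := univ.erase T.root) (s' := fun u => {T.parent u})]
  · simp only [sum_singleton]
  · simp [mem_children, and_comm, eq_comm]

lemma dotProduct_nonpos_of_dualFeasible {x α β : V → ℝ} (hx : T.Feasible x)
    (hd : T.DualFeasible α β) : x ⬝ᵥ β ≤ 0 := by
  obtain ⟨hx0, hxc⟩ := hx
  obtain ⟨hα, -, hcon, hroot⟩ := hd
  have hchildren : ∑ u ∈ univ.erase T.root, α (T.parent u) * x u ≤ ∑ w, α w * x w := by
    rw [← T.sum_sum_children fun w u => α w * x u]
    gcongr with w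
    rw [← mul_sum]
    exact mul_le_mul_of_nonneg_left (hxc w) (hα w)
  have hterm : ∀ v ∈ univ.erase T.root, x v * β v ≤ α (T.parent v) * x v - α v * x v :=
    fun v hv => by nlinarith [hx0 v, hcon v (ne_of_mem_erase hv)]
  calc x ⬝ᵥ β = x T.root * β T.root + ∑ v ∈ univ.erase T.root, x v * β v :=
        (add_sum_erase _ (fun v => x v * β v) (mem_univ _)).symm
    _ ≤ -(α T.root * x T.root) + ∑ v ∈ univ.erase T.root, (α (T.parent v) * x v - α v * x v) :=
        add_le_add (by nlinarith [hx0 T.root]) (sum_le_sum hterm)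
    _ = ∑ u ∈ univ.erase T.root, α (T.parent u) * x u - ∑ w, α w * x w := by
        rw [sum_sub_distrib, ← add_sum_erase _ (fun w => α w * x w) (mem_univ T.root)]
        ring
    _ ≤ 0 := sub_nonpos.2 hchildren

theorem exists_dualFeasible_iff {β : V → ℝ} :
    (∃ α, T.DualFeasible α β) ↔ (∀ x ∈ T.feasibleCone, x ⬝ᵥ β ≤ 0) ∧ ∀ v, |β v| ≤ 1 :=
  ⟨fun ⟨_, hd⟩ => ⟨fun _ hx => T.dotProduct_nonpos_of_dualFeasible hx hd,
      fun v => abs_le.2 (hd.2.1 v)⟩,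
    fun ⟨hK, hβ⟩ => T.exists_dualFeasible (T.pathSum_nonpos_of_mem_polar hK) hβ⟩

end SBHTree

theorem stmt_12_general {V : Type*} [Fintype V] [DecidableEq V] (T : SBHTree V)
    (a : V → ℝ) :
    sInf {c : ℝ | ∃ x : V → ℝ, T.Feasible x ∧ (∑ v, |a v - x v|) = c}
      = sSup {c : ℝ | ∃ α β : V → ℝ, T.DualFeasible α β ∧ (∑ v, a v * β v) = c} := by
  have hD : {c : ℝ | ∃ α β : V → ℝ, T.DualFeasible α β ∧ (∑ v, a v * β v) = c}
      = (a ⬝ᵥ ·) '' {β | (∀ x ∈ T.feasibleCone, x ⬝ᵥ β ≤ 0) ∧ ∀ v, |β v| ≤ 1} := by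
    ext c
    simp only [Set.mem_image, ← T.exists_dualFeasible_iff]
    exact ⟨fun ⟨α, β, hd, hc⟩ => ⟨β, ⟨α, hd⟩, hc⟩, fun ⟨β, ⟨α, hd⟩, hc⟩ => ⟨α, β, hd, hc⟩⟩
  rw [hD]
  exact sInf_sum_abs_sub_eq_sSup T.feasibleCone a

/-- Strong LP duality for the ℓ1-SBHSP problem on a finite
rooted tree with non-negative targets: the infimum of `∑ v, |a v − x v|` over
feasible assignments `x` equals the supremum of `∑ v, a v * β v` over
dual-feasible pairs `(α, β)`. -/
theorem stmt_12 {V : Type*} [Fintype V] [DecidableEq V] (T : SBHTree V)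
    (a : V → ℝ) (ha : ∀ v, 0 ≤ a v) :
    sInf {c : ℝ | ∃ x : V → ℝ, T.Feasible x ∧ (∑ v, |a v - x v|) = c}
      = sSup {c : ℝ | ∃ α β : V → ℝ, T.DualFeasible α β ∧ (∑ v, a v * β v) = c} :=
  stmt_12_general T a
end

section
/- Let T be a finite rooted tree with vertex set V, root r, and parent function p, and let a : V → ℝ with a ≥ 0. Then the dual LP of the ℓ1-SBHSP problem admits an integral optimal solution: there exists a dual-feasible pair (α, β) with α taking non-negative integer values and β_v ∈ {−1, 0, 1} for every v, such that ∑_v a_v β_v ≥ ∑_v a_v β'_v for every dual-feasible pair (α', β'). -/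
/-! For fixed `α`, the dual objective is largest when every `β v` is raised to its largest
allowed value, `-α r` at the root and `min 1 (α (p v) - α v)` elsewhere, so it suffices to
maximise a function of `α` alone over the `α` admitting a feasible `β`. Rounding `α` to
`⌊α + θ⌋` with `θ` uniform in `[0, 1)` preserves this constraint and produces integer points.
Since `⌊x + θ⌋ - ⌊y + θ⌋` only takes the values `⌊x - y⌋` and `⌊x - y⌋ + 1`, and `min 1` is
affine between consecutive integers, the average over `θ` of the rounded objective is the
objective at `α`. So the best of the finitely many (bounded) integer points is optimal, and
the corresponding `β` takes values in `{-1, 0, 1}`. -/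

open Finset
open scoped Classical

open intervalIntegral

lemma intervalIntegrable_floor_add (x a b : ℝ) :
    IntervalIntegrable (fun θ => (⌊x + θ⌋ : ℝ)) MeasureTheory.volume a b :=
  Monotone.intervalIntegrable fun _ _ h => Int.cast_mono (Int.floor_mono (by linarith))

lemma integral_floor_add (x : ℝ) : ∫ θ in (0 : ℝ)..1, (⌊x + θ⌋ : ℝ) = x := by
  set c := 1 - Int.fract x with hc
  have hc0 : 0 ≤ c := by linarith [Int.fract_lt_one x]
  have hc1 : c ≤ 1 := by linarith [Int.fract_nonneg x]
  have below : (Set.uIoo 0 c).EqOn (fun θ => (⌊x + θ⌋ : ℝ)) fun _ => (⌊x⌋ : ℝ) := by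
    rintro θ ⟨hθ0, hθc⟩
    rw [min_eq_left hc0] at hθ0
    rw [max_eq_right hc0] at hθc
    have : ⌊x + θ⌋ = ⌊x⌋ := by
      rw [Int.floor_eq_iff]
      constructor <;> linarith [Int.floor_add_fract x]
    simp [this]
  have above : (Set.uIoo c 1).EqOn (fun θ => (⌊x + θ⌋ : ℝ)) fun _ => (⌊x⌋ : ℝ) + 1 := by
    rintro θ ⟨hcθ, hθ1⟩
    rw [min_eq_left hc1] at hcθ
    rw [max_eq_right hc1] at hθ1
    have : ⌊x + θ⌋ = ⌊x⌋ + 1 := by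
      rw [Int.floor_eq_iff]
      push_cast
      constructor <;> linarith [Int.floor_add_fract x]
    simp [this]
  rw [← integral_add_adjacent_intervals (intervalIntegrable_floor_add x 0 c)
    (intervalIntegrable_floor_add x c 1), integral_congr_uIoo below, integral_congr_uIoo above]
  simp only [integral_const, smul_eq_mul, sub_zero, hc]
  linarith [Int.floor_add_fract x]

def AffineBetweenIntegers (g : ℝ → ℝ) : Prop :=
  ∀ (k : ℤ) (t : ℝ), (k : ℝ) ≤ t → t ≤ k + 1 → g t = g k + (g (k + 1) - g k) * (t - k)

lemma affineBetweenIntegers_min_one : AffineBetweenIntegers (min 1) := by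
  intro k t hkt htk
  rcases le_or_gt 1 (k : ℝ) with hk | hk
  · rw [min_eq_left hk, min_eq_left (by linarith), min_eq_left (by linarith)]
    ring
  · have hk' : (k : ℝ) + 1 ≤ 1 := by exact_mod_cast Int.add_one_le_of_lt (by exact_mod_cast hk)
    rw [min_eq_right hk.le, min_eq_right hk', min_eq_right (by linarith)]
    ring

namespace AffineBetweenIntegers

variable {g : ℝ → ℝ}

lemma comp_floor_add_sub_floor_add (hg : AffineBetweenIntegers g) (x y θ : ℝ) :
    g ((⌊x + θ⌋ : ℝ) - ⌊y + θ⌋) = g ⌊x - y⌋ + (g (⌊x - y⌋ + 1) - g ⌊x - y⌋) *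
      ((⌊x + θ⌋ : ℝ) - ⌊y + θ⌋ - ⌊x - y⌋) := by
  have lower := Int.le_floor_add (x - y) (y + θ)
  have upper := Int.le_floor_add_floor (x - y) (y + θ)
  rw [show x - y + (y + θ) = x + θ by ring] at lower upper
  apply hg
  · exact_mod_cast (by omega : ⌊x - y⌋ ≤ ⌊x + θ⌋ - ⌊y + θ⌋)
  · exact_mod_cast (by omega : ⌊x + θ⌋ - ⌊y + θ⌋ ≤ ⌊x - y⌋ + 1)

lemma intervalIntegrable_comp_floor_add_sub_floor_add (hg : AffineBetweenIntegers g)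
    (x y : ℝ) :
    IntervalIntegrable (fun θ => g ((⌊x + θ⌋ : ℝ) - ⌊y + θ⌋)) MeasureTheory.volume 0 1 := by
  simp only [hg.comp_floor_add_sub_floor_add]
  exact intervalIntegrable_const.add
    (((intervalIntegrable_floor_add x 0 1).sub (intervalIntegrable_floor_add y 0 1)).sub
      intervalIntegrable_const |>.const_mul _)

lemma integral_comp_floor_add_sub_floor_add (hg : AffineBetweenIntegers g) (x y : ℝ) :
    ∫ θ in (0 : ℝ)..1, g ((⌊x + θ⌋ : ℝ) - ⌊y + θ⌋) = g (x - y) := by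
  have hx := intervalIntegrable_floor_add x 0 1
  have hy := intervalIntegrable_floor_add y 0 1
  simp only [hg.comp_floor_add_sub_floor_add]
  rw [integral_add intervalIntegrable_const
      (((hx.sub hy).sub intervalIntegrable_const).const_mul _),
    integral_const_mul, integral_sub (hx.sub hy) intervalIntegrable_const, integral_sub hx hy,
    integral_floor_add, integral_floor_add, integral_const, integral_const]
  rw [hg ⌊x - y⌋ (x - y) (Int.floor_le _) (Int.lt_floor_add_one _).le]
  simp

end AffineBetweenIntegers

namespace SBHTree

variable {V : Type*} [Fintype V] [DecidableEq V] (T : SBHTree V)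

def Admissible (α : V → ℝ) : Prop :=
  (∀ v, 0 ≤ α v) ∧ α T.root ≤ 1 ∧ ∀ v, α v ≤ α (T.parent v) + 1

def maxBeta (α : V → ℝ) (v : V) : ℝ :=
  if v = T.root then -α T.root else min 1 (α (T.parent v) - α v)

def dualValue (a α : V → ℝ) : ℝ :=
  ∑ v, a v * T.maxBeta α v

variable {T}

lemma DualFeasible.admissible {α β : V → ℝ} (h : T.DualFeasible α β) : T.Admissible α := by
  obtain ⟨hα, hβ, hchild, hroot⟩ := h
  refine ⟨hα, by linarith [(hβ T.root).1], fun v => ?_⟩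
  by_cases hv : v = T.root
  · rw [hv, T.parent_root]
    linarith
  · linarith [hchild v hv, (hβ v).1]

lemma DualFeasible.sum_le_dualValue {a α β : V → ℝ} (ha : ∀ v, 0 ≤ a v)
    (h : T.DualFeasible α β) : ∑ v, a v * β v ≤ T.dualValue a α := by
  obtain ⟨-, hβ, hchild, hroot⟩ := h
  refine Finset.sum_le_sum fun v _ => mul_le_mul_of_nonneg_left ?_ (ha v)
  unfold maxBeta
  split_ifs with hv
  · subst hv
    linarith
  · exact le_min (hβ v).2 (by linarith [hchild v hv])

lemma Admissible.dualFeasible_maxBeta {α : V → ℝ} (h : T.Admissible α) :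
    T.DualFeasible α (T.maxBeta α) := by
  obtain ⟨hα, hroot, hparent⟩ := h
  refine ⟨hα, fun v => ?_, fun v hv => ?_, ?_⟩
  · unfold maxBeta
    split_ifs with hv
    · constructor <;> linarith [hα T.root]
    · exact ⟨le_min (by norm_num) (by linarith [hparent v]), min_le_left _ _⟩
  · simp only [maxBeta, hv, if_false]
    linarith [min_le_right 1 (α (T.parent v) - α v)]
  · simp [maxBeta]

lemma Admissible.floor_add {α : V → ℝ} (h : T.Admissible α) {θ : ℝ} (hθ0 : 0 ≤ θ)
    (hθ1 : θ < 1) : T.Admissible fun v => (⌊α v + θ⌋ : ℝ) := by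
  obtain ⟨hα, hroot, hparent⟩ := h
  refine ⟨fun v => ?_, ?_, fun v => ?_⟩ <;> beta_reduce
  · exact_mod_cast Int.floor_nonneg.mpr (add_nonneg (hα v) hθ0)
  · have : ⌊α T.root + θ⌋ < 2 := Int.floor_lt.mpr (by push_cast; linarith)
    exact_mod_cast (by omega : ⌊α T.root + θ⌋ ≤ 1)
  · have := Int.floor_mono (by push_cast; linarith [hparent v] :
      α v + θ ≤ α (T.parent v) + θ + (1 : ℤ))
    rw [Int.floor_add_intCast] at this
    exact_mod_cast this

lemma Admissible.le_iterate_parent {α : V → ℝ} (h : T.Admissible α) (n : ℕ) (v : V) :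
    α v ≤ α (T.parent^[n] v) + n := by
  induction n generalizing v with
  | zero => simp
  | succ n ih =>
    rw [Function.iterate_succ_apply]
    push_cast
    linarith [h.2.2 v, ih (T.parent v)]

lemma Admissible.le_find_reaches_root_add_one {α : V → ℝ} (h : T.Admissible α) (v : V) :
    α v ≤ Nat.find (T.reaches_root v) + 1 := by
  have := h.le_iterate_parent (Nat.find (T.reaches_root v)) v
  rw [Nat.find_spec (T.reaches_root v)] at this
  linarith [h.2.1]

variable (T)

lemma finite_setOf_int_admissible : {m : V → ℤ | T.Admissible fun v => (m v : ℝ)}.Finite := by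
  refine (Set.finite_Icc 0 fun v => (Nat.find (T.reaches_root v) + 1 : ℤ)).subset fun m hm => ?_
  refine ⟨fun v => Int.cast_nonneg_iff.mp (hm.1 v), fun v => ?_⟩
  exact_mod_cast hm.le_find_reaches_root_add_one v

lemma intervalIntegrable_maxBeta_floor_add (α : V → ℝ) (v : V) :
    IntervalIntegrable (fun θ => T.maxBeta (fun v => (⌊α v + θ⌋ : ℝ)) v)
      MeasureTheory.volume 0 1 := by
  by_cases hv : v = T.root
  · simp only [maxBeta, hv, if_true]
    exact (intervalIntegrable_floor_add _ 0 1).neg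
  · simp only [maxBeta, hv, if_false]
    exact affineBetweenIntegers_min_one.intervalIntegrable_comp_floor_add_sub_floor_add _ _

lemma integral_maxBeta_floor_add (α : V → ℝ) (v : V) :
    ∫ θ in (0 : ℝ)..1, T.maxBeta (fun v => (⌊α v + θ⌋ : ℝ)) v = T.maxBeta α v := by
  by_cases hv : v = T.root
  · simp only [maxBeta, hv, if_true, integral_neg, integral_floor_add]
  · simp only [maxBeta, hv, if_false]
    exact affineBetweenIntegers_min_one.integral_comp_floor_add_sub_floor_add _ _

lemma integral_dualValue_floor_add (a α : V → ℝ) :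
    ∫ θ in (0 : ℝ)..1, T.dualValue a (fun v => (⌊α v + θ⌋ : ℝ)) = T.dualValue a α := by
  simp only [dualValue]
  rw [integral_finsetSum fun v _ => (T.intervalIntegrable_maxBeta_floor_add α v).const_mul _]
  simp only [integral_const_mul, integral_maxBeta_floor_add]

lemma exists_int_admissible_forall_dualValue_le (a : V → ℝ) :
    ∃ m : V → ℤ, T.Admissible (fun v => (m v : ℝ)) ∧
      ∀ α, T.Admissible α → T.dualValue a α ≤ T.dualValue a fun v => (m v : ℝ) := by
  have hzero : T.Admissible fun v => ((0 : V → ℤ) v : ℝ) := by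
    simp [Admissible]
  obtain ⟨m, hm, hmax⟩ := Set.exists_max_image _ (fun m : V → ℤ => T.dualValue a fun v => (m v : ℝ))
    T.finite_setOf_int_admissible ⟨0, hzero⟩
  refine ⟨m, hm, fun α hα => ?_⟩
  have hint : IntervalIntegrable (fun θ => T.dualValue a fun v => (⌊α v + θ⌋ : ℝ))
      MeasureTheory.volume 0 1 := by
    simpa only [dualValue, Finset.sum_fn] using IntervalIntegrable.sum Finset.univ fun v _ =>
      (T.intervalIntegrable_maxBeta_floor_add α v).const_mul (a v)
  calc T.dualValue a α = ∫ θ in (0 : ℝ)..1, T.dualValue a fun v => (⌊α v + θ⌋ : ℝ) :=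
        (T.integral_dualValue_floor_add a α).symm
    _ ≤ ∫ θ in (0 : ℝ)..1, T.dualValue a fun v => (m v : ℝ) :=
        integral_mono_on_of_le_Ioo zero_le_one hint intervalIntegrable_const
          fun θ hθ => hmax (fun v => ⌊α v + θ⌋) (hα.floor_add hθ.1.le hθ.2)
    _ = T.dualValue a fun v => (m v : ℝ) := by simp

variable {T}

lemma Admissible.maxBeta_eq_neg_one_or_zero_or_one {m : V → ℤ}
    (hm : T.Admissible fun v => (m v : ℝ)) (v : V) :
    T.maxBeta (fun v => (m v : ℝ)) v = -1 ∨ T.maxBeta (fun v => (m v : ℝ)) v = 0 ∨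
      T.maxBeta (fun v => (m v : ℝ)) v = 1 := by
  obtain ⟨hnonneg, hroot, hparent⟩ := hm
  beta_reduce at hnonneg hroot hparent
  unfold maxBeta
  split_ifs with hv
  · have h0 : 0 ≤ m T.root := Int.cast_nonneg_iff.mp (hnonneg T.root)
    have h1 : m T.root ≤ 1 := by exact_mod_cast hroot
    rcases (by omega : m T.root = 0 ∨ m T.root = 1) with h | h <;> simp [h]
  · have : m v ≤ m (T.parent v) + 1 := by exact_mod_cast hparent v
    rw [← Int.cast_sub]
    rcases (by omega : m (T.parent v) - m v = -1 ∨ m (T.parent v) - m v = 0 ∨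
      1 ≤ m (T.parent v) - m v) with h | h | h
    · simp [h]
    · simp [h]
    · right; right
      exact min_eq_left (by exact_mod_cast h)

end SBHTree

/-- The dual LP of the ℓ1-SBHSP problem on a finite rooted tree
with non-negative targets admits an integral optimal solution: a dual-feasible
pair `(α, β)` with `α` taking non-negative integer values and
`β v ∈ {−1, 0, 1}` for every `v`, whose dual objective `∑ v, a v * β v` is at
least that of every dual-feasible pair. -/
theorem stmt_13 {V : Type*} [Fintype V] [DecidableEq V] (T : SBHTree V)
    (a : V → ℝ) (ha : ∀ v, 0 ≤ a v) :
    ∃ α β : V → ℝ, T.DualFeasible α β ∧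
      (∀ v, ∃ n : ℕ, α v = (n : ℝ)) ∧
      (∀ v, β v = -1 ∨ β v = 0 ∨ β v = 1) ∧
      ∀ α' β' : V → ℝ, T.DualFeasible α' β' →
        (∑ v, a v * β' v) ≤ ∑ v, a v * β v := by
  obtain ⟨m, hm, hmax⟩ := T.exists_int_admissible_forall_dualValue_le a
  refine ⟨fun v => m v, T.maxBeta fun v => m v, hm.dualFeasible_maxBeta, fun v => ?_,
    hm.maxBeta_eq_neg_one_or_zero_or_one,
    fun α' β' h => (h.sum_le_dualValue ha).trans (hmax α' h.admissible)⟩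
  exact ⟨(m v).toNat, by
    rw [← Int.cast_natCast, Int.toNat_of_nonneg (Int.cast_nonneg_iff.mp (hm.1 v))]⟩
end

section
/- Let T be a finite rooted tree with vertex set V, targets a : V → ℝ with a ≥ 0, and positive integer weights w : V → ℕ (w_v ≥ 1). Let T̃ be the chain-expanded tree of (T, w): its vertices are pairs (i, j) with i ∈ V and 1 ≤ j ≤ w_i; for each i and 1 ≤ j < w_i, (i, j) is a child of (i, j+1); for each child k ∈ C(i), the vertex (k, w_k) is a child of (i, 1); and every vertex (i, j) has target value ã_{(i,j)} = a_i. Then the minimum of the unweighted ℓ1 objective ∑_{(i,j)} |ã_{(i,j)} − x̃_{(i,j)}| over feasible assignments x̃ on T̃ equals the minimum of the weighted ℓ1 objective ∑_{i ∈ V} w_i |a_i − x_i| over feasible assignments x on T. -/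
open Finset
open scoped Classical

/-- Child relation of the chain-expanded tree `T̃` of `(T, w)`. The chain for
vertex `i` is indexed by `Fin (w i)`, with index `j` representing level `j + 1`:
`(i, j)` is a child of `(i, j + 1)` for `j + 1 < w i`, and for each child
`k ∈ C(i)` in `T`, the top vertex `(k, w k − 1)` of `k`'s chain is a child of the
bottom vertex `(i, 0)` of `i`'s chain. -/
def ExpChild {V : Type*} [Fintype V] [DecidableEq V]
    (T : SBHTree V) (w : V → ℕ) (c p : Σ i : V, Fin (w i)) : Prop :=
  (c.1 = p.1 ∧ (p.2 : ℕ) = (c.2 : ℕ) + 1) ∨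
    ((c.1 ≠ T.root ∧ T.parent c.1 = p.1) ∧ (c.2 : ℕ) = w c.1 - 1 ∧ (p.2 : ℕ) = 0)

/-- Feasibility on the chain-expanded tree: non-negativity and the value at each
vertex is at least the sum of the values at its children. -/
def ExpFeasible {V : Type*} [Fintype V] [DecidableEq V]
    (T : SBHTree V) (w : V → ℕ) (x : (Σ i : V, Fin (w i)) → ℝ) : Prop :=
  (∀ v, 0 ≤ x v) ∧
    ∀ p : Σ i : V, Fin (w i),
      (∑ c ∈ univ.filter (fun c => ExpChild T w c p), x c) ≤ x p

/-!
A feasible assignment `x` on `T` lifts to `T̃` by copying `x i` along the chain of `i`; this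
keeps feasibility and turns the weighted cost into the unweighted one. Conversely, feasibility on
`T̃` makes the values increase up each chain, from a bottom value `ℓ i` to a top value `u i`.
Clamping `a i` to `[ℓ i, u i]` gives an assignment on `T` that is feasible, because the tops of
the chains of the children of `i` sum to at most `ℓ i`, and that costs no more, because the clamp
is the point of `[ℓ i, u i]` nearest to `a i`.
-/

theorem abs_sub_max_min_le {lo hi t a : ℝ} (hlo : lo ≤ t) (hhi : t ≤ hi) :
    |a - max lo (min a hi)| ≤ |a - t| := by
  rcases le_total a lo with h | h
  · rw [min_eq_left (h.trans (hlo.trans hhi)), max_eq_left h, abs_of_nonpos (by linarith)]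
    linarith [neg_abs_le (a - t)]
  rcases le_total a hi with h' | h'
  · simp [min_eq_left h', max_eq_right h]
  · rw [min_eq_right h', max_eq_right (hlo.trans hhi), abs_of_nonneg (by linarith)]
    linarith [le_abs_self (a - t)]

theorem sum_sigma_fin_comp_fst {V : Type*} [Fintype V] (w : V → ℕ) (f : V → ℝ) :
    ∑ v : Σ i : V, Fin (w i), f v.1 = ∑ i, (w i : ℝ) * f i := by
  simp [Fintype.sum_sigma]

namespace SBHTree

variable {V : Type*} [Fintype V] [DecidableEq V] (T : SBHTree V) {w : V → ℕ}

def chainBot (hw : ∀ v, 1 ≤ w v) (i : V) : Σ i : V, Fin (w i) := ⟨i, ⟨0, hw i⟩⟩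

def chainTop (hw : ∀ v, 1 ≤ w v) (i : V) : Σ i : V, Fin (w i) :=
  ⟨i, ⟨w i - 1, by have := hw i; omega⟩⟩

theorem expChild_filter_chainBot (hw : ∀ v, 1 ≤ w v) (i : V) :
    univ.filter (fun c => ExpChild T w c (chainBot hw i)) =
      (T.children i).image (chainTop hw) := by
  ext ⟨k, j, hj⟩
  simp only [ExpChild, chainBot, chainTop, children, mem_filter, Finset.mem_univ, true_and,
    mem_image, Sigma.mk.injEq]
  constructor
  · rintro (⟨-, h⟩ | ⟨hk, rfl, -⟩)
    · omega
    · exact ⟨k, hk, rfl, HEq.rfl⟩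
  · rintro ⟨k, hk, rfl, hj⟩
    exact Or.inr ⟨hk, (Fin.mk.inj_iff.1 (eq_of_heq hj)).symm, trivial⟩

theorem expChild_filter_succ (i : V) (j : ℕ) (hj : j + 1 < w i) :
    univ.filter (fun c => ExpChild T w c ⟨i, ⟨j + 1, hj⟩⟩) = {⟨i, ⟨j, by omega⟩⟩} := by
  ext ⟨k, l, hl⟩
  simp only [mem_filter, Finset.mem_univ, true_and, Finset.mem_singleton]
  simp only [ExpChild, Sigma.mk.injEq]
  constructor
  · rintro (⟨rfl, h⟩ | ⟨-, -, h⟩)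
    · obtain rfl : l = j := by simpa using h.symm
      exact ⟨rfl, HEq.rfl⟩
    · omega
  · rintro ⟨rfl, h⟩
    exact Or.inl ⟨rfl, by simp [(Fin.mk.inj_iff.1 (eq_of_heq h))]⟩

theorem sum_expChild_chainBot (hw : ∀ v, 1 ≤ w v) (i : V) (f : (Σ i : V, Fin (w i)) → ℝ) :
    ∑ c ∈ univ.filter (fun c => ExpChild T w c (chainBot hw i)), f c =
      ∑ k ∈ T.children i, f (chainTop hw k) := by
  rw [expChild_filter_chainBot, sum_image fun _ _ _ _ h => congrArg Sigma.fst h]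

theorem Feasible.expFeasible_comp_fst {T : SBHTree V} (hw : ∀ v, 1 ≤ w v) {x : V → ℝ}
    (hx : T.Feasible x) :
    ExpFeasible T w (fun v => x v.1) := by
  refine ⟨fun v => hx.1 v.1, ?_⟩
  rintro ⟨i, ⟨_ | j, hj⟩⟩
  · exact (T.sum_expChild_chainBot hw i _).trans_le (hx.2 i)
  · rw [expChild_filter_succ, sum_singleton]

end SBHTree

namespace ExpFeasible

open SBHTree

variable {V : Type*} [Fintype V] [DecidableEq V] {T : SBHTree V} {w : V → ℕ}
  {xt : (Σ i : V, Fin (w i)) → ℝ}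

theorem monotone_chain (hxt : ExpFeasible T w xt) (i : V) :
    Monotone fun j : Fin (w i) => xt ⟨i, j⟩ := by
  rintro ⟨j₁, h₁⟩ ⟨j₂, h₂⟩ (hj : j₁ ≤ j₂)
  induction j₂, hj using Nat.le_induction with
  | base => rfl
  | succ j _ ih =>
    refine (ih (by omega)).trans ?_
    have := hxt.2 ⟨i, ⟨j + 1, h₂⟩⟩
    rwa [expChild_filter_succ, sum_singleton] at this

theorem exists_feasible_cost_le (hw : ∀ v, 1 ≤ w v) (hxt : ExpFeasible T w xt)
    (a : V → ℝ) :
    ∃ x : V → ℝ, T.Feasible x ∧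
      ∑ v, (w v : ℝ) * |a v - x v| ≤ ∑ v : Σ i : V, Fin (w i), |a v.1 - xt v| := by
  have bot_le (i : V) (j : Fin (w i)) : xt (chainBot hw i) ≤ xt ⟨i, j⟩ :=
    hxt.monotone_chain i (Nat.zero_le _)
  have le_top (i : V) (j : Fin (w i)) : xt ⟨i, j⟩ ≤ xt (chainTop hw i) :=
    hxt.monotone_chain i (show (j : ℕ) ≤ w i - 1 by omega)
  set x : V → ℝ := fun i => max (xt (chainBot hw i)) (min (a i) (xt (chainTop hw i)))
  have bot_le_x (i : V) : xt (chainBot hw i) ≤ x i := le_max_left _ _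
  have x_le_top (i : V) : x i ≤ xt (chainTop hw i) :=
    max_le (bot_le i _) (min_le_right _ _)
  refine ⟨x, ⟨fun i => (hxt.1 _).trans (bot_le_x i), fun i => ?_⟩, ?_⟩
  · calc ∑ k ∈ T.children i, x k
        ≤ ∑ k ∈ T.children i, xt (chainTop hw k) := sum_le_sum fun k _ => x_le_top k
      _ = ∑ c ∈ univ.filter (fun c => ExpChild T w c (chainBot hw i)), xt c :=
        (T.sum_expChild_chainBot hw i xt).symm
      _ ≤ x i := (hxt.2 _).trans (bot_le_x i)
  · rw [Fintype.sum_sigma]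
    refine sum_le_sum fun i _ => ?_
    calc (w i : ℝ) * |a i - x i| = ∑ _j : Fin (w i), |a i - x i| := by simp
      _ ≤ ∑ j : Fin (w i), |a i - xt ⟨i, j⟩| :=
        sum_le_sum fun j _ => abs_sub_max_min_le (bot_le i j) (le_top i j)

end ExpFeasible

theorem stmt_14_general {V : Type*} [Fintype V] [DecidableEq V] (T : SBHTree V)
    (a : V → ℝ)
    (w : V → ℕ) (hw : ∀ v, 1 ≤ w v) :
    sInf {c : ℝ | ∃ xt : (Σ i : V, Fin (w i)) → ℝ, ExpFeasible T w xt ∧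
        (∑ v : Σ i : V, Fin (w i), |a v.1 - xt v|) = c}
      = sInf {c : ℝ | ∃ x : V → ℝ, T.Feasible x ∧
          (∑ v, (w v : ℝ) * |a v - x v|) = c} := by
  apply csInf_eq_csInf_of_forall_exists_le
  · rintro _ ⟨xt, hxt, rfl⟩
    obtain ⟨x, hx, hcost⟩ := hxt.exists_feasible_cost_le hw a
    exact ⟨_, ⟨x, hx, rfl⟩, hcost⟩
  · rintro _ ⟨x, hx, rfl⟩
    exact ⟨_, ⟨_, hx.expFeasible_comp_fst hw, sum_sigma_fin_comp_fst w fun i => |a i - x i|⟩,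
      le_rfl⟩

/-- For a finite rooted tree with non-negative targets `a` and
positive integer weights `w`, the minimum of the unweighted ℓ1 objective over
feasible assignments on the chain-expanded tree `T̃` (whose vertex `(i, j)` has
target `a i`) equals the minimum of the weighted ℓ1 objective
`∑ v, w v * |a v − x v|` over feasible assignments on `T`. -/
theorem stmt_14 {V : Type*} [Fintype V] [DecidableEq V] (T : SBHTree V)
    (a : V → ℝ) (ha : ∀ v, 0 ≤ a v)
    (w : V → ℕ) (hw : ∀ v, 1 ≤ w v) :
    sInf {c : ℝ | ∃ xt : (Σ i : V, Fin (w i)) → ℝ, ExpFeasible T w xt ∧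
        (∑ v : Σ i : V, Fin (w i), |a v.1 - xt v|) = c}
      = sInf {c : ℝ | ∃ x : V → ℝ, T.Feasible x ∧
          (∑ v, (w v : ℝ) * |a v - x v|) = c} :=
  stmt_14_general T a w hw
end

section
/- Let T be a finite rooted tree with vertex set V, targets a : V → ℝ with a ≥ 0, and positive integer weights w : V → ℕ (w_v ≥ 1), and let T̃ be the chain-expanded tree of (T, w) with targets ã_{(i,j)} = a_i. If x̃ is a feasible assignment on T̃ that minimizes the ℓ1 objective ∑_{(i,j)} |ã_{(i,j)} − x̃_{(i,j)}| over all feasible assignments on T̃, then x̃ is constant along each chain: for every i ∈ V, x̃_{(i,1)} = x̃_{(i,2)} = ⋯ = x̃_{(i,w_i)}. -/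
open Finset
open scoped Classical

/-!
The feasibility constraints make every chain nondecreasing from its bottom `(i, 1)` to its top
`(i, w_i)`, so all its values lie in `[b, t] = [x̃(i,1), x̃(i,w_i)]`. Replace the whole chain by the
constant `c` nearest to `a_i` in `[b, t]`. This stays feasible: the bottom vertex only grows (its
children lie on other chains), and the top vertex, the only one that is a child of another chain,
only shrinks. No term of the objective increases, and if the chain was not constant then some
value differs from `c`, and its term strictly decreases, contradicting optimality.
-/

theorem Fin.monotone_of_le_of_val_eq_succ {α : Type*} [Preorder α] {n : ℕ} {f : Fin n → α}
    (h : ∀ i j : Fin n, (j : ℕ) = i + 1 → f i ≤ f j) : Monotone f := by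
  cases n with
  | zero => exact fun i => i.elim0
  | succ n => exact Fin.monotone_iff_le_succ.2 fun i => h _ _ (by simp)

theorem abs_sub_max_min_lt {a b t x : ℝ} (hx : x ∈ Set.Icc b t) (hne : x ≠ max b (min a t)) :
    |a - max b (min a t)| < |a - x| := by
  obtain ⟨hbx, hxt⟩ := hx
  rcases le_total a b with hab | hba
  · rw [min_eq_left (hab.trans (hbx.trans hxt)), max_eq_left hab] at hne ⊢
    rw [abs_of_nonpos (by linarith), abs_of_nonpos (by linarith)]
    linarith [lt_of_le_of_ne hbx hne.symm]
  rcases le_total a t with hat | hta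
  · rw [min_eq_left hat, max_eq_right hba] at hne ⊢
    simpa [sub_eq_zero, eq_comm] using hne
  · rw [min_eq_right hta, max_eq_right (hbx.trans hxt)] at hne ⊢
    rw [abs_of_nonneg (by linarith), abs_of_nonneg (by linarith)]
    linarith [lt_of_le_of_ne hxt hne]

theorem abs_sub_max_min_le_s15 {a b t x : ℝ} (hx : x ∈ Set.Icc b t) :
    |a - max b (min a t)| ≤ |a - x| := by
  rcases eq_or_ne x (max b (min a t)) with rfl | hne
  · exact le_rfl
  · exact (abs_sub_max_min_lt hx hne).le

section ReplaceChain

variable {ι : Type*} [DecidableEq ι] {β : ι → Type*}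

def replaceChain (x : (Σ i, β i) → ℝ) (i : ι) (c : ℝ) : (Σ i, β i) → ℝ :=
  fun v => if v.1 = i then c else x v

@[simp]
theorem replaceChain_self (x : (Σ i, β i) → ℝ) (i : ι) (c : ℝ) (j : β i) :
    replaceChain x i c ⟨i, j⟩ = c :=
  if_pos rfl

theorem replaceChain_of_ne (x : (Σ i, β i) → ℝ) {i : ι} (c : ℝ) {v : Σ i, β i} (hv : v.1 ≠ i) :
    replaceChain x i c v = x v :=
  if_neg hv

theorem sum_abs_sub_replaceChain_lt [Fintype ι] [∀ i, Fintype (β i)] (a : ι → ℝ)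
    (x : (Σ i, β i) → ℝ) {i : ι} {b t : ℝ} (hmem : ∀ j, x ⟨i, j⟩ ∈ Set.Icc b t) {j : β i}
    (hj : x ⟨i, j⟩ ≠ max b (min (a i) t)) :
    ∑ v, |a v.1 - replaceChain x i (max b (min (a i) t)) v| < ∑ v, |a v.1 - x v| := by
  refine sum_lt_sum (fun ⟨k, l⟩ _ => ?_) ⟨⟨i, j⟩, mem_univ _, ?_⟩
  · by_cases hk : k = i
    · subst hk
      simpa using abs_sub_max_min_le_s15 (hmem l)
    · rw [replaceChain_of_ne x _ hk]
  · simpa using abs_sub_max_min_lt (hmem j) hj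

end ReplaceChain

theorem SBHTree.eq_root_of_parent_eq_self {V : Type*} [Fintype V] [DecidableEq V]
    (T : SBHTree V) {u : V} (hu : T.parent u = u) : u = T.root := by
  obtain ⟨n, hn⟩ := T.reaches_root u
  rwa [Function.iterate_fixed hu] at hn

section ChainExpansion

variable {V : Type*} [Fintype V] [DecidableEq V] {T : SBHTree V} {w : V → ℕ}

theorem filter_expChild_succ (T : SBHTree V) {i : V} {m : ℕ} (hm : m + 1 < w i) :
    univ.filter (fun c => ExpChild T w c ⟨i, ⟨m + 1, hm⟩⟩) = {⟨i, ⟨m, by omega⟩⟩} := by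
  ext ⟨k, j⟩
  rw [mem_filter, mem_singleton]
  simp only [mem_univ, true_and, ExpChild, Sigma.mk.injEq]
  constructor
  · rintro (⟨rfl, hj⟩ | ⟨-, -, h⟩)
    · exact ⟨rfl, heq_of_eq (Fin.ext (by simp only at hj ⊢; omega))⟩
    · omega
  · rintro ⟨rfl, hj⟩
    exact Or.inl ⟨rfl, by simp [eq_of_heq hj]⟩

theorem ExpChild.fst_ne_of_val_eq_zero {c p : Σ i : V, Fin (w i)} (h : ExpChild T w c p)
    (hp : (p.2 : ℕ) = 0) : c.1 ≠ p.1 := by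
  rcases h with ⟨-, h⟩ | ⟨⟨hroot, hparent⟩, -, -⟩
  · omega
  · exact fun hcp => hroot (T.eq_root_of_parent_eq_self (hparent.trans hcp.symm))

theorem ExpChild.val_eq_of_fst_ne {c p : Σ i : V, Fin (w i)} (h : ExpChild T w c p)
    (hcp : c.1 ≠ p.1) : (c.2 : ℕ) = w c.1 - 1 :=
  h.elim (fun h => absurd h.1 hcp) fun h => h.2.1

theorem ExpFeasible.monotone_chain_s15 {x : (Σ i : V, Fin (w i)) → ℝ} (hx : ExpFeasible T w x)
    (i : V) : Monotone fun j : Fin (w i) => x ⟨i, j⟩ := by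
  refine Fin.monotone_of_le_of_val_eq_succ fun j k hjk => ?_
  obtain ⟨k, hk⟩ := k
  subst hjk
  simpa [filter_expChild_succ T hk] using hx.2 ⟨i, ⟨j + 1, hk⟩⟩

theorem expFeasible_replaceChain {x : (Σ i : V, Fin (w i)) → ℝ} (hx : ExpFeasible T w x)
    {i : V} {c : ℝ} (hbot : ∀ j : Fin (w i), (j : ℕ) = 0 → x ⟨i, j⟩ ≤ c)
    (htop : ∀ j : Fin (w i), (j : ℕ) = w i - 1 → c ≤ x ⟨i, j⟩) :
    ExpFeasible T w (replaceChain x i c) := by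
  refine ⟨fun ⟨k, j⟩ => ?_, fun ⟨k, j⟩ => ?_⟩
  · by_cases hk : k = i
    · subst hk
      simpa using (hx.1 ⟨k, ⟨0, j.pos⟩⟩).trans (hbot _ rfl)
    · simpa [replaceChain_of_ne x c (v := ⟨k, j⟩) hk] using hx.1 ⟨k, j⟩
  by_cases hk : k = i
  · subst hk
    obtain ⟨_ | m, hj⟩ := j
    · calc ∑ v ∈ univ.filter (fun v => ExpChild T w v ⟨k, ⟨0, hj⟩⟩), replaceChain x k c v
          = ∑ v ∈ univ.filter (fun v => ExpChild T w v ⟨k, ⟨0, hj⟩⟩), x v :=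
            sum_congr rfl fun v hv =>
              replaceChain_of_ne x c ((mem_filter.1 hv).2.fst_ne_of_val_eq_zero rfl)
        _ ≤ x ⟨k, ⟨0, hj⟩⟩ := hx.2 _
        _ ≤ replaceChain x k c ⟨k, ⟨0, hj⟩⟩ := by simpa using hbot _ rfl
    · simp [filter_expChild_succ T hj]
  · calc ∑ v ∈ univ.filter (fun v => ExpChild T w v ⟨k, j⟩), replaceChain x i c v
        ≤ ∑ v ∈ univ.filter (fun v => ExpChild T w v ⟨k, j⟩), x v := by
          refine sum_le_sum fun ⟨l, m⟩ hv => ?_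
          by_cases hl : l = i
          · subst hl
            simpa using htop m ((mem_filter.1 hv).2.val_eq_of_fst_ne (Ne.symm hk))
          · rw [replaceChain_of_ne x c hl]
      _ ≤ x ⟨k, j⟩ := hx.2 _
      _ = replaceChain x i c ⟨k, j⟩ := (replaceChain_of_ne x c hk).symm

end ChainExpansion

theorem stmt_15_general {V : Type*} [Fintype V] [DecidableEq V] (T : SBHTree V)
    (a : V → ℝ)
    (w : V → ℕ)
    (xt : (Σ i : V, Fin (w i)) → ℝ) (hfeas : ExpFeasible T w xt)
    (hopt : ∀ yt : (Σ i : V, Fin (w i)) → ℝ, ExpFeasible T w yt →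
      (∑ v : Σ i : V, Fin (w i), |a v.1 - xt v|)
        ≤ ∑ v : Σ i : V, Fin (w i), |a v.1 - yt v|) :
    ∀ (i : V) (j j' : Fin (w i)), xt ⟨i, j⟩ = xt ⟨i, j'⟩ := by
  intro i j j'
  by_contra hne
  set b := xt ⟨i, ⟨0, j.pos⟩⟩
  set t := xt ⟨i, ⟨w i - 1, Nat.sub_one_lt_of_lt j.isLt⟩⟩
  have hmem : ∀ k : Fin (w i), xt ⟨i, k⟩ ∈ Set.Icc b t := fun k =>
    ⟨hfeas.monotone_chain_s15 i (Nat.zero_le k), hfeas.monotone_chain_s15 i (Nat.le_sub_one_of_lt k.isLt)⟩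
  obtain ⟨k, hk⟩ : ∃ k : Fin (w i), xt ⟨i, k⟩ ≠ max b (min (a i) t) := by
    by_contra! h
    exact hne ((h j).trans (h j').symm)
  have hfeas' : ExpFeasible T w (replaceChain xt i (max b (min (a i) t))) := by
    refine expFeasible_replaceChain hfeas (fun l hl => ?_) (fun l hl => ?_)
    · exact (congrArg (fun l => xt ⟨i, l⟩) (Fin.ext hl)).trans_le (le_max_left _ _)
    · rw [show l = ⟨w i - 1, Nat.sub_one_lt_of_lt j.isLt⟩ from Fin.ext hl]
      exact max_le ((hmem j).1.trans (hmem j).2) (min_le_right _ _)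
  exact (hopt _ hfeas').not_gt (sum_abs_sub_replaceChain_lt a xt hmem hk)

/-- For a finite rooted tree with non-negative targets `a` and
positive integer weights `w`, any feasible assignment on the chain-expanded tree
`T̃` (whose vertex `(i, j)` has target `a i`) that minimizes the ℓ1 objective over
all feasible assignments on `T̃` is constant along each chain. -/
theorem stmt_15 {V : Type*} [Fintype V] [DecidableEq V] (T : SBHTree V)
    (a : V → ℝ) (ha : ∀ v, 0 ≤ a v)
    (w : V → ℕ) (hw : ∀ v, 1 ≤ w v)
    (xt : (Σ i : V, Fin (w i)) → ℝ) (hfeas : ExpFeasible T w xt)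
    (hopt : ∀ yt : (Σ i : V, Fin (w i)) → ℝ, ExpFeasible T w yt →
      (∑ v : Σ i : V, Fin (w i), |a v.1 - xt v|)
        ≤ ∑ v : Σ i : V, Fin (w i), |a v.1 - yt v|) :
    ∀ (i : V) (j j' : Fin (w i)), xt ⟨i, j⟩ = xt ⟨i, j'⟩ :=
  stmt_15_general T a w xt hfeas hopt
end
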